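/- arXiv:1601.06475 — 10 statements merged into one kernel-verified Lean document; each statement's English description precedes it below -/
import Mathlib

section
/- Let s ≥ 2, n = 3s and k = 2s − 1. Let K_1, K_2, K_3 ⊆ {1, …, n} satisfy |K_i| = 2s, |K_i ∩ K_j| = s for i ≠ j, and K_1 ∩ K_2 ∩ K_3 = ∅ (so K_1 ∪ K_2 ∪ K_3 = {1, …, n}). For i ≠ j put W_{ij} = ⋂_{r ∈ K_i ∩ K_j} ker l_r, an (s−1)-dimensional linear subspace of ℂ^{2s−1}. If W_{12} + W_{13} + W_{23} is a proper subspace of ℂ^{2s−1}, then D_{K_1} ∩ D_{K_2} ∩ D_{K_3} has codimension 2 in ℂ^n; otherwise it has codimension 3. -/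
open Module Submodule

/-- The subspace `D_J ⊆ ℂ^ι` of translation vectors `x` for which the translated
hyperplanes `{l i = x i}`, `i ∈ J`, have a common point. -/
noncomputable def DD {ι V : Type*} [AddCommGroup V] [Module ℂ V]
    (l : ι → Module.Dual ℂ V) (J : Finset ι) : Submodule ℂ (ι → ℂ) where
  carrier := {x | ∃ y : V, ∀ i ∈ J, x i = l i y}
  add_mem' := by
    rintro a b ⟨y, hy⟩ ⟨z, hz⟩
    exact ⟨y + z, fun i hi => by simp [hy i hi, hz i hi]⟩
  zero_mem' := ⟨0, fun i _ => by simp⟩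
  smul_mem' := by
    rintro c a ⟨y, hy⟩
    exact ⟨c • y, fun i hi => by simp [hy i hi]⟩

section helpers

variable {s : ℕ} (l : Fin (3 * s) → Module.Dual ℂ (Fin (2 * s - 1) → ℂ))

/-- Evaluation map `y ↦ (l i y)_{i ∈ P}`. -/
noncomputable def LP (P : Finset (Fin (3 * s))) :
    (Fin (2 * s - 1) → ℂ) →ₗ[ℂ] (P → ℂ) :=
  LinearMap.pi fun j => l j.1

theorem factA
    (hgen : ∀ S : Finset (Fin (3 * s)), S.card = 2 * s - 1 →
      LinearIndependent ℂ (fun i : S => l i.1))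
    {A : Finset (Fin (3 * s))} (hA : 2 * s - 1 ≤ A.card)
    {y : Fin (2 * s - 1) → ℂ} (hy : ∀ i ∈ A, l i y = 0) : y = 0 := by
  obtain ⟨S, hSA, hScard⟩ := Finset.exists_subset_card_eq hA
  have hind := hgen S hScard
  have hcard : Fintype.card S = finrank ℂ (Module.Dual ℂ (Fin (2 * s - 1) → ℂ)) := by
    rw [Fintype.card_coe, hScard, Subspace.dual_finrank_eq, Module.finrank_fin_fun]
  have hspan := hind.span_eq_top_of_card_eq_finrank' hcard
  have hle : Submodule.span ℂ (Set.range fun i : S => l i.1) ≤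
      LinearMap.ker (Module.Dual.eval ℂ (Fin (2 * s - 1) → ℂ) y) := by
    rw [Submodule.span_le]
    rintro f ⟨i, rfl⟩
    simpa using hy i.1 (hSA i.2)
  rw [hspan] at hle
  have : Module.Dual.eval ℂ (Fin (2 * s - 1) → ℂ) y = 0 :=
    LinearMap.ker_eq_top.mp (top_unique hle)
  exact (Module.eval_apply_eq_zero_iff ℂ y).mp this

theorem surjLP (hs : 2 ≤ s)
    (hgen : ∀ S : Finset (Fin (3 * s)), S.card = 2 * s - 1 →
      LinearIndependent ℂ (fun i : S => l i.1))
    {P : Finset (Fin (3 * s))} (hP : P.card ≤ 2 * s - 1) :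
    Function.Surjective (LP l P) := by
  obtain ⟨S, hPS, hScard⟩ := Finset.exists_superset_card_eq hP
    (by rw [Fintype.card_fin]; omega)
  have hinj : Function.Injective (LP l S) := by
    rw [← LinearMap.ker_eq_bot, eq_bot_iff]
    intro y hy
    simp only [LinearMap.mem_ker, LP] at hy
    have : y = 0 := by
      refine factA l hgen (le_of_eq hScard.symm) (fun i hi => ?_)
      have := congrFun hy ⟨i, hi⟩
      simpa using this
    simpa using this
  have hsurjS : Function.Surjective (LP l S) := by
    rw [← LinearMap.injective_iff_surjective_of_finrank_eq_finrank
      (by rw [Module.finrank_fin_fun, Module.finrank_pi, Fintype.card_coe, hScard])]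
    exact hinj
  -- restriction map
  let proj : (S → ℂ) →ₗ[ℂ] (P → ℂ) := LinearMap.pi fun j => LinearMap.proj ⟨j.1, hPS j.2⟩
  have hcomp : LP l P = proj.comp (LP l S) := by
    ext y j; rfl
  have hprojsurj : Function.Surjective proj := by
    intro x
    refine ⟨fun i => if h : i.1 ∈ P then x ⟨i.1, h⟩ else 0, ?_⟩
    funext j
    simp [proj, j.2]
  rw [hcomp]
  exact hprojsurj.comp hsurjS

theorem finrank_iInf_ker (hs : 2 ≤ s)
    (hgen : ∀ S : Finset (Fin (3 * s)), S.card = 2 * s - 1 →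
      LinearIndependent ℂ (fun i : S => l i.1))
    {P : Finset (Fin (3 * s))} (hP : P.card ≤ 2 * s - 1) :
    finrank ℂ ↥(⨅ r ∈ P, LinearMap.ker (l r)) + P.card = 2 * s - 1 := by
  have hker : LinearMap.ker (LP l P) = ⨅ r ∈ P, LinearMap.ker (l r) := by
    ext y
    simp [LP, Submodule.mem_iInf, funext_iff, Subtype.forall]
  have h1 := LinearMap.finrank_range_add_finrank_ker (LP l P)
  rw [LinearMap.range_eq_top.mpr (surjLP l hs hgen hP), finrank_top,
    Module.finrank_pi, Fintype.card_coe, hker, Module.finrank_fin_fun] at h1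
  omega

end helpers

section TS

variable {V : Type*} [AddCommGroup V] [Module ℂ V]

/-- `(y₁,y₂,y₃) ↦ y₁ - y₂`. -/
noncomputable def d12 : (V × V × V) →ₗ[ℂ] V :=
  LinearMap.fst ℂ V (V × V) - (LinearMap.fst ℂ V V).comp (LinearMap.snd ℂ V (V × V))

/-- `(y₁,y₂,y₃) ↦ y₂ - y₃`. -/
noncomputable def d23 : (V × V × V) →ₗ[ℂ] V :=
  (LinearMap.fst ℂ V V).comp (LinearMap.snd ℂ V (V × V)) -
    (LinearMap.snd ℂ V V).comp (LinearMap.snd ℂ V (V × V))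

/-- `(y₁,y₂,y₃) ↦ y₁ - y₃`. -/
noncomputable def d13 : (V × V × V) →ₗ[ℂ] V :=
  LinearMap.fst ℂ V (V × V) - (LinearMap.snd ℂ V V).comp (LinearMap.snd ℂ V (V × V))

@[simp] lemma d12_apply (z : V × V × V) : d12 z = z.1 - z.2.1 := rfl
@[simp] lemma d23_apply (z : V × V × V) : d23 z = z.2.1 - z.2.2 := rfl
@[simp] lemma d13_apply (z : V × V × V) : d13 z = z.1 - z.2.2 := rfl

/-- The consistency space `T`. -/
noncomputable def Tsub (W₁₂ W₂₃ W₁₃ : Submodule ℂ V) : Submodule ℂ (V × V × V) :=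
  Submodule.comap d12 W₁₂ ⊓ Submodule.comap d23 W₂₃ ⊓ Submodule.comap d13 W₁₃

lemma mem_Tsub {W₁₂ W₂₃ W₁₃ : Submodule ℂ V} {z : V × V × V} :
    z ∈ Tsub W₁₂ W₂₃ W₁₃ ↔
      z.1 - z.2.1 ∈ W₁₂ ∧ z.2.1 - z.2.2 ∈ W₂₃ ∧ z.1 - z.2.2 ∈ W₁₃ := by
  simp [Tsub, and_assoc]

/-- The space `S = {(u,v) ∈ W₁₂ × W₂₃ : u + v ∈ W₁₃}`. -/
noncomputable def Ssub (W₁₂ W₂₃ W₁₃ : Submodule ℂ V) : Submodule ℂ (V × V) :=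
  (W₁₂.prod W₂₃) ⊓ Submodule.comap (LinearMap.fst ℂ V V + LinearMap.snd ℂ V V) W₁₃

lemma mem_Ssub {W₁₂ W₂₃ W₁₃ : Submodule ℂ V} {z : V × V} :
    z ∈ Ssub W₁₂ W₂₃ W₁₃ ↔ z.1 ∈ W₁₂ ∧ z.2 ∈ W₂₃ ∧ z.1 + z.2 ∈ W₁₃ := by
  simp [Ssub, and_assoc]

lemma finrank_Ssub [FiniteDimensional ℂ V] {W₁₂ W₂₃ W₁₃ : Submodule ℂ V} (hinf : W₁₂ ⊓ W₂₃ = ⊥) :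
    finrank ℂ ↥(Ssub W₁₂ W₂₃ W₁₃) = finrank ℂ ↥((W₁₂ ⊔ W₂₃) ⊓ W₁₃) := by
  set ρ : ↥(Ssub W₁₂ W₂₃ W₁₃) →ₗ[ℂ] V :=
    (LinearMap.fst ℂ V V + LinearMap.snd ℂ V V).comp (Ssub W₁₂ W₂₃ W₁₃).subtype with hρ
  have hρ_apply : ∀ z : ↥(Ssub W₁₂ W₂₃ W₁₃), ρ z = z.1.1 + z.1.2 := fun z => rfl
  have hinj : Function.Injective ρ := by
    rw [← LinearMap.ker_eq_bot, eq_bot_iff]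
    rintro ⟨⟨u, v⟩, hz⟩ hzz
    rw [LinearMap.mem_ker, hρ_apply] at hzz
    have hzz' : u + v = 0 := hzz
    rw [mem_Ssub] at hz
    have hu : u ∈ W₁₂ ⊓ W₂₃ := by
      refine ⟨hz.1, ?_⟩
      rw [add_eq_zero_iff_eq_neg.mp hzz']
      exact neg_mem hz.2.1
    rw [hinf, Submodule.mem_bot] at hu
    have hv : v = 0 := by rw [hu, zero_add] at hzz'; exact hzz'
    simp only [Submodule.mem_bot]
    ext <;> simp [hu, hv]
  have hrange : LinearMap.range ρ = (W₁₂ ⊔ W₂₃) ⊓ W₁₃ := by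
    ext w
    constructor
    · rintro ⟨⟨⟨u, v⟩, hz⟩, rfl⟩
      rw [mem_Ssub] at hz
      exact ⟨Submodule.add_mem_sup hz.1 hz.2.1, hz.2.2⟩
    · rw [Submodule.mem_inf]
      rintro ⟨h1, h2⟩
      rw [Submodule.mem_sup] at h1
      obtain ⟨u, hu, v, hv, rfl⟩ := h1
      exact ⟨⟨(u, v), mem_Ssub.mpr ⟨hu, hv, h2⟩⟩, rfl⟩
  rw [← hrange]
  exact (LinearMap.finrank_range_of_inj hinj).symm

lemma finrank_Tsub [FiniteDimensional ℂ V] {W₁₂ W₂₃ W₁₃ : Submodule ℂ V} :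
    finrank ℂ ↥(Tsub W₁₂ W₂₃ W₁₃) =
      finrank ℂ ↥(Ssub W₁₂ W₂₃ W₁₃) + finrank ℂ V := by
  set θ : ↥(Tsub W₁₂ W₂₃ W₁₃) →ₗ[ℂ] (V × V) :=
    (LinearMap.prod d12 d23).comp (Tsub W₁₂ W₂₃ W₁₃).subtype with hθ
  have hθ_apply : ∀ z : ↥(Tsub W₁₂ W₂₃ W₁₃),
      θ z = (z.1.1 - z.1.2.1, z.1.2.1 - z.1.2.2) := fun z => rfl
  have hrange : LinearMap.range θ = Ssub W₁₂ W₂₃ W₁₃ := by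
    ext w
    constructor
    · rintro ⟨⟨z, hz⟩, rfl⟩
      rw [mem_Tsub] at hz
      rw [hθ_apply, mem_Ssub]
      refine ⟨hz.1, hz.2.1, ?_⟩
      rw [sub_add_sub_cancel]
      exact hz.2.2
    · rw [mem_Ssub]
      rintro ⟨h1, h2, h3⟩
      refine ⟨⟨(w.1 + w.2, w.2, 0), mem_Tsub.mpr ⟨by simpa using h1, by simpa using h2,
        by simpa using h3⟩⟩, ?_⟩
      rw [hθ_apply]
      ext <;> simp
  -- kernel of θ is the diagonal, of dimension finrank V
  set δ : V →ₗ[ℂ] ↥(Tsub W₁₂ W₂₃ W₁₃) :=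
    LinearMap.codRestrict (Tsub W₁₂ W₂₃ W₁₃)
      (LinearMap.prod LinearMap.id (LinearMap.prod LinearMap.id LinearMap.id))
      (fun y => mem_Tsub.mpr ⟨by simp, by simp, by simp⟩) with hδ
  have hδ_apply : ∀ y : V, (δ y : V × V × V) = (y, y, y) := fun y => rfl
  have hδinj : Function.Injective δ := by
    intro a b hab
    have := congrArg (fun z : ↥(Tsub W₁₂ W₂₃ W₁₃) => (z : V × V × V).1) hab
    simpa [hδ_apply] using this
  have hδrange : LinearMap.range δ = LinearMap.ker θ := by
    ext z
    constructor
    · rintro ⟨y, rfl⟩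
      rw [LinearMap.mem_ker, hθ_apply]
      ext <;> simp [hδ_apply]
    · intro hz
      rw [LinearMap.mem_ker, hθ_apply, Prod.ext_iff] at hz
      obtain ⟨h1, h2⟩ := hz
      simp only at h1 h2
      refine ⟨z.1.1, ?_⟩
      apply Subtype.ext
      rw [hδ_apply]
      have e2 : z.1.1 = z.1.2.1 := sub_eq_zero.mp h1
      have e3 : z.1.2.1 = z.1.2.2 := sub_eq_zero.mp h2
      exact Prod.ext rfl (Prod.ext e2 (e2.trans e3))
  have h1 := LinearMap.finrank_range_add_finrank_ker θ
  rw [hrange, ← hδrange, LinearMap.finrank_range_of_inj hδinj] at h1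
  omega

end TS


section Gmap

variable {s : ℕ}

/-- The assembling map `(y₁,y₂,y₃) ↦ x` with `x i = l i y₁` on `P12`, `l i y₂` on `P23`,
`l i y₃` elsewhere. -/
noncomputable def Gmap (l : Fin (3 * s) → Module.Dual ℂ (Fin (2 * s - 1) → ℂ))
    (P12 P23 : Finset (Fin (3 * s))) :
    ((Fin (2 * s - 1) → ℂ) × (Fin (2 * s - 1) → ℂ) × (Fin (2 * s - 1) → ℂ)) →ₗ[ℂ]
      (Fin (3 * s) → ℂ) :=
  LinearMap.pi fun i =>
    if i ∈ P12 then (l i).comp (LinearMap.fst ℂ _ _)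
    else if i ∈ P23 then (l i).comp ((LinearMap.fst ℂ _ _).comp (LinearMap.snd ℂ _ _))
    else (l i).comp ((LinearMap.snd ℂ _ _).comp (LinearMap.snd ℂ _ _))

variable (l : Fin (3 * s) → Module.Dual ℂ (Fin (2 * s - 1) → ℂ))
  (P12 P23 : Finset (Fin (3 * s)))

lemma Gmap_apply_of_mem12 {i : Fin (3 * s)} (h : i ∈ P12)
    (z : (Fin (2 * s - 1) → ℂ) × (Fin (2 * s - 1) → ℂ) × (Fin (2 * s - 1) → ℂ)) :
    Gmap l P12 P23 z i = l i z.1 := by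
  simp [Gmap, h]

lemma Gmap_apply_of_mem23 {i : Fin (3 * s)} (h1 : i ∉ P12) (h2 : i ∈ P23)
    (z : (Fin (2 * s - 1) → ℂ) × (Fin (2 * s - 1) → ℂ) × (Fin (2 * s - 1) → ℂ)) :
    Gmap l P12 P23 z i = l i z.2.1 := by
  simp [Gmap, h1, h2]

lemma Gmap_apply_of_mem13 {i : Fin (3 * s)} (h1 : i ∉ P12) (h2 : i ∉ P23)
    (z : (Fin (2 * s - 1) → ℂ) × (Fin (2 * s - 1) → ℂ) × (Fin (2 * s - 1) → ℂ)) :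
    Gmap l P12 P23 z i = l i z.2.2 := by
  simp [Gmap, h1, h2]

end Gmap

/-- Lemma `lem:case3`: for `n = 3s`, `k = 2s - 1` and subsets `K₁, K₂, K₃` with
`|Kᵢ| = 2s`, `|Kᵢ ∩ Kⱼ| = s` (`i ≠ j`) and `K₁ ∩ K₂ ∩ K₃ = ∅`, setting
`W_{ij} = ⋂_{r ∈ Kᵢ ∩ Kⱼ} ker l_r`: if `W₁₂ + W₁₃ + W₂₃` is a proper subspace of `ℂ^{2s-1}`
then `D_{K₁} ∩ D_{K₂} ∩ D_{K₃}` has codimension `2` in `ℂ^n`, otherwise codimension `3`. -/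
theorem stmt3 (s : ℕ) (hs : 2 ≤ s)
    (l : Fin (3 * s) → Module.Dual ℂ (Fin (2 * s - 1) → ℂ))
    (hgen : ∀ S : Finset (Fin (3 * s)), S.card = 2 * s - 1 →
      LinearIndependent ℂ (fun i : S => l i.1))
    (K₁ K₂ K₃ : Finset (Fin (3 * s)))
    (hc₁ : K₁.card = 2 * s) (hc₂ : K₂.card = 2 * s) (hc₃ : K₃.card = 2 * s)
    (h₁₂ : (K₁ ∩ K₂).card = s) (h₁₃ : (K₁ ∩ K₃).card = s) (h₂₃ : (K₂ ∩ K₃).card = s)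
    (htriple : K₁ ∩ K₂ ∩ K₃ = ∅)
    (W₁₂ W₁₃ W₂₃ : Submodule ℂ (Fin (2 * s - 1) → ℂ))
    (hW₁₂ : W₁₂ = ⨅ r ∈ K₁ ∩ K₂, LinearMap.ker (l r))
    (hW₁₃ : W₁₃ = ⨅ r ∈ K₁ ∩ K₃, LinearMap.ker (l r))
    (hW₂₃ : W₂₃ = ⨅ r ∈ K₂ ∩ K₃, LinearMap.ker (l r)) :
    (W₁₂ ⊔ W₁₃ ⊔ W₂₃ ≠ ⊤ →
      Module.finrank ℂ ↥(DD l K₁ ⊓ DD l K₂ ⊓ DD l K₃) = 3 * s - 2) ∧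
    (W₁₂ ⊔ W₁₃ ⊔ W₂₃ = ⊤ →
      Module.finrank ℂ ↥(DD l K₁ ⊓ DD l K₂ ⊓ DD l K₃) = 3 * s - 3) := by
  classical
  -- combinatorial facts
  have hd1213 : Disjoint (K₁ ∩ K₂) (K₁ ∩ K₃) := by
    rw [Finset.disjoint_left]
    intro a h1 h2
    have : a ∈ K₁ ∩ K₂ ∩ K₃ :=
      Finset.mem_inter.mpr ⟨h1, (Finset.mem_inter.mp h2).2⟩
    rw [htriple] at this
    exact absurd this (Finset.notMem_empty a)
  have hd1223 : Disjoint (K₁ ∩ K₂) (K₂ ∩ K₃) := by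
    rw [Finset.disjoint_left]
    intro a h1 h2
    have : a ∈ K₁ ∩ K₂ ∩ K₃ :=
      Finset.mem_inter.mpr ⟨h1, (Finset.mem_inter.mp h2).2⟩
    rw [htriple] at this
    exact absurd this (Finset.notMem_empty a)
  have hd1323 : Disjoint (K₁ ∩ K₃) (K₂ ∩ K₃) := by
    rw [Finset.disjoint_left]
    intro a h1 h2
    have : a ∈ K₁ ∩ K₂ ∩ K₃ :=
      Finset.mem_inter.mpr ⟨Finset.mem_inter.mpr
        ⟨(Finset.mem_inter.mp h1).1, (Finset.mem_inter.mp h2).1⟩, (Finset.mem_inter.mp h1).2⟩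
    rw [htriple] at this
    exact absurd this (Finset.notMem_empty a)
  have hK1 : K₁ = (K₁ ∩ K₂) ∪ (K₁ ∩ K₃) := by
    refine (Finset.eq_of_subset_of_card_le
      (Finset.union_subset Finset.inter_subset_left Finset.inter_subset_left) ?_).symm
    rw [Finset.card_union_of_disjoint hd1213, h₁₂, h₁₃, hc₁]
    omega
  have hK2 : K₂ = (K₁ ∩ K₂) ∪ (K₂ ∩ K₃) := by
    refine (Finset.eq_of_subset_of_card_le
      (Finset.union_subset Finset.inter_subset_right Finset.inter_subset_left) ?_).symm
    rw [Finset.card_union_of_disjoint hd1223, h₁₂, h₂₃, hc₂]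
    omega
  have hK3 : K₃ = (K₁ ∩ K₃) ∪ (K₂ ∩ K₃) := by
    refine (Finset.eq_of_subset_of_card_le
      (Finset.union_subset Finset.inter_subset_right Finset.inter_subset_right) ?_).symm
    rw [Finset.card_union_of_disjoint hd1323, h₁₃, h₂₃, hc₃]
    omega
  have huniv : (K₁ ∩ K₂) ∪ ((K₁ ∩ K₃) ∪ (K₂ ∩ K₃)) = Finset.univ := by
    apply Finset.eq_univ_of_card
    rw [Finset.card_union_of_disjoint (Finset.disjoint_union_right.mpr ⟨hd1213, hd1223⟩),
      Finset.card_union_of_disjoint hd1323, h₁₂, h₁₃, h₂₃, Fintype.card_fin]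
    ring
  have hcover : ∀ i : Fin (3 * s), i ∉ K₁ ∩ K₂ → i ∉ K₂ ∩ K₃ → i ∈ K₁ ∩ K₃ := by
    intro i h1 h2
    have hu : i ∈ (K₁ ∩ K₂) ∪ ((K₁ ∩ K₃) ∪ (K₂ ∩ K₃)) := huniv ▸ Finset.mem_univ i
    simp only [Finset.mem_union] at hu
    tauto
  -- membership in the W spaces
  have hmW12 : ∀ z, z ∈ W₁₂ ↔ ∀ r ∈ K₁ ∩ K₂, l r z = 0 := by
    intro z; rw [hW₁₂]; simp [Submodule.mem_iInf, LinearMap.mem_ker]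
  have hmW13 : ∀ z, z ∈ W₁₃ ↔ ∀ r ∈ K₁ ∩ K₃, l r z = 0 := by
    intro z; rw [hW₁₃]; simp [Submodule.mem_iInf, LinearMap.mem_ker]
  have hmW23 : ∀ z, z ∈ W₂₃ ↔ ∀ r ∈ K₂ ∩ K₃, l r z = 0 := by
    intro z; rw [hW₂₃]; simp [Submodule.mem_iInf, LinearMap.mem_ker]
  -- dimensions of the W spaces
  have ha := finrank_iInf_ker l hs hgen (P := K₁ ∩ K₂) (by rw [h₁₂]; omega)
  rw [← hW₁₂, h₁₂] at ha
  have hb := finrank_iInf_ker l hs hgen (P := K₁ ∩ K₃) (by rw [h₁₃]; omega)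
  rw [← hW₁₃, h₁₃] at hb
  have hc := finrank_iInf_ker l hs hgen (P := K₂ ∩ K₃) (by rw [h₂₃]; omega)
  rw [← hW₂₃, h₂₃] at hc
  -- trivial pairwise intersections
  have hbot1213 : W₁₂ ⊓ W₁₃ = ⊥ := by
    rw [eq_bot_iff]
    intro y hy
    rw [Submodule.mem_bot]
    refine factA l hgen (A := K₁) (by rw [hc₁]; omega) fun i hi => ?_
    rw [hK1, Finset.mem_union] at hi
    rcases hi with h | h
    · exact (hmW12 y).mp hy.1 i h
    · exact (hmW13 y).mp hy.2 i h
  have hbot1223 : W₁₂ ⊓ W₂₃ = ⊥ := by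
    rw [eq_bot_iff]
    intro y hy
    rw [Submodule.mem_bot]
    refine factA l hgen (A := K₂) (by rw [hc₂]; omega) fun i hi => ?_
    rw [hK2, Finset.mem_union] at hi
    rcases hi with h | h
    · exact (hmW12 y).mp hy.1 i h
    · exact (hmW23 y).mp hy.2 i h
  -- dimension bookkeeping for sups
  have hsup1213 := Submodule.finrank_sup_add_finrank_inf_eq W₁₂ W₁₃
  rw [hbot1213, finrank_bot] at hsup1213
  have hsup1223 := Submodule.finrank_sup_add_finrank_inf_eq W₁₂ W₂₃
  rw [hbot1223, finrank_bot] at hsup1223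
  have hsupbig := Submodule.finrank_sup_add_finrank_inf_eq (W₁₂ ⊔ W₂₃) W₁₃
  rw [sup_right_comm] at hsupbig
  have hwle : finrank ℂ ↥(W₁₂ ⊔ W₁₃ ⊔ W₂₃) ≤ 2 * s - 1 := by
    have := Submodule.finrank_le (W₁₂ ⊔ W₁₃ ⊔ W₂₃)
    rwa [Module.finrank_fin_fun] at this
  have hwge : finrank ℂ ↥(W₁₂ ⊔ W₁₃) ≤ finrank ℂ ↥(W₁₂ ⊔ W₁₃ ⊔ W₂₃) :=
    Submodule.finrank_mono le_sup_left
  -- S and T dimensions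
  have hSdim : finrank ℂ ↥(Ssub W₁₂ W₂₃ W₁₃) = finrank ℂ ↥((W₁₂ ⊔ W₂₃) ⊓ W₁₃) :=
    finrank_Ssub hbot1223
  have hTdim : finrank ℂ ↥(Tsub W₁₂ W₂₃ W₁₃) =
      finrank ℂ ↥(Ssub W₁₂ W₂₃ W₁₃) + finrank ℂ (Fin (2 * s - 1) → ℂ) := finrank_Tsub
  rw [Module.finrank_fin_fun] at hTdim
  -- identification of the intersection with the image of T
  have hmemDD : ∀ (J : Finset (Fin (3 * s))) (x : Fin (3 * s) → ℂ),
      x ∈ DD l J ↔ ∃ y, ∀ i ∈ J, x i = l i y := fun J x => Iff.rfl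
  have hDmap : DD l K₁ ⊓ DD l K₂ ⊓ DD l K₃ =
      Submodule.map (Gmap l (K₁ ∩ K₂) (K₂ ∩ K₃)) (Tsub W₁₂ W₂₃ W₁₃) := by
    ext x
    simp only [Submodule.mem_inf, hmemDD, Submodule.mem_map]
    constructor
    · rintro ⟨⟨⟨y₁, hy₁⟩, y₂, hy₂⟩, y₃, hy₃⟩
      refine ⟨(y₁, y₂, y₃), mem_Tsub.mpr ⟨?_, ?_, ?_⟩, ?_⟩
      · refine (hmW12 _).mpr fun r hr => ?_
        rw [map_sub, ← hy₁ r (Finset.mem_inter.mp hr).1, ← hy₂ r (Finset.mem_inter.mp hr).2,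
          sub_self]
      · refine (hmW23 _).mpr fun r hr => ?_
        rw [map_sub, ← hy₂ r (Finset.mem_inter.mp hr).1, ← hy₃ r (Finset.mem_inter.mp hr).2,
          sub_self]
      · refine (hmW13 _).mpr fun r hr => ?_
        rw [map_sub, ← hy₁ r (Finset.mem_inter.mp hr).1, ← hy₃ r (Finset.mem_inter.mp hr).2,
          sub_self]
      · funext i
        by_cases h12 : i ∈ K₁ ∩ K₂
        · rw [Gmap_apply_of_mem12 l _ _ h12]
          exact (hy₁ i (Finset.mem_inter.mp h12).1).symm
        by_cases h23 : i ∈ K₂ ∩ K₃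
        · rw [Gmap_apply_of_mem23 l _ _ h12 h23]
          exact (hy₂ i (Finset.mem_inter.mp h23).1).symm
        · have h13 := hcover i h12 h23
          rw [Gmap_apply_of_mem13 l _ _ h12 h23]
          exact (hy₃ i (Finset.mem_inter.mp h13).2).symm
    · rintro ⟨⟨y₁, y₂, y₃⟩, ht, rfl⟩
      rw [mem_Tsub] at ht
      obtain ⟨ht12, ht23, ht13⟩ := ht
      have e12 : ∀ r ∈ K₁ ∩ K₂, l r y₁ = l r y₂ := fun r hr =>
        sub_eq_zero.mp (by simpa [map_sub] using (hmW12 _).mp ht12 r hr)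
      have e23 : ∀ r ∈ K₂ ∩ K₃, l r y₂ = l r y₃ := fun r hr =>
        sub_eq_zero.mp (by simpa [map_sub] using (hmW23 _).mp ht23 r hr)
      have e13 : ∀ r ∈ K₁ ∩ K₃, l r y₁ = l r y₃ := fun r hr =>
        sub_eq_zero.mp (by simpa [map_sub] using (hmW13 _).mp ht13 r hr)
      refine ⟨⟨⟨y₁, fun i hi => ?_⟩, ⟨y₂, fun i hi => ?_⟩⟩, ⟨y₃, fun i hi => ?_⟩⟩
      · rw [hK1, Finset.mem_union] at hi
        rcases hi with h | h
        · rw [Gmap_apply_of_mem12 l _ _ h]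
        · rw [Gmap_apply_of_mem13 l _ _ (Finset.disjoint_right.mp hd1213 h)
            (Finset.disjoint_left.mp hd1323 h)]
          exact (e13 i h).symm
      · rw [hK2, Finset.mem_union] at hi
        rcases hi with h | h
        · rw [Gmap_apply_of_mem12 l _ _ h]
          exact e12 i h
        · rw [Gmap_apply_of_mem23 l _ _ (Finset.disjoint_right.mp hd1223 h) h]
      · rw [hK3, Finset.mem_union] at hi
        rcases hi with h | h
        · rw [Gmap_apply_of_mem13 l _ _ (Finset.disjoint_right.mp hd1213 h)
            (Finset.disjoint_left.mp hd1323 h)]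
        · rw [Gmap_apply_of_mem23 l _ _ (Finset.disjoint_right.mp hd1223 h) h]
          exact e23 i h
  -- injectivity of G on T
  have hinjG : ∀ z ∈ Tsub W₁₂ W₂₃ W₁₃, Gmap l (K₁ ∩ K₂) (K₂ ∩ K₃) z = 0 → z = 0 := by
    rintro ⟨y₁, y₂, y₃⟩ ht hG
    rw [mem_Tsub] at ht
    obtain ⟨ht12, ht23, ht13⟩ := ht
    have e12 : ∀ r ∈ K₁ ∩ K₂, l r y₁ = l r y₂ := fun r hr =>
      sub_eq_zero.mp (by simpa [map_sub] using (hmW12 _).mp ht12 r hr)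
    have e23 : ∀ r ∈ K₂ ∩ K₃, l r y₂ = l r y₃ := fun r hr =>
      sub_eq_zero.mp (by simpa [map_sub] using (hmW23 _).mp ht23 r hr)
    have e13 : ∀ r ∈ K₁ ∩ K₃, l r y₁ = l r y₃ := fun r hr =>
      sub_eq_zero.mp (by simpa [map_sub] using (hmW13 _).mp ht13 r hr)
    have hz : ∀ i, Gmap l (K₁ ∩ K₂) (K₂ ∩ K₃) (y₁, y₂, y₃) i = 0 := fun i => congrFun hG i
    have hy₁ : y₁ = 0 := by
      refine factA l hgen (A := K₁) (by rw [hc₁]; omega) fun i hi => ?_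
      rw [hK1, Finset.mem_union] at hi
      rcases hi with h | h
      · have := hz i; rwa [Gmap_apply_of_mem12 l _ _ h] at this
      · have := hz i
        rw [Gmap_apply_of_mem13 l _ _ (Finset.disjoint_right.mp hd1213 h)
          (Finset.disjoint_left.mp hd1323 h)] at this
        rw [e13 i h]; exact this
    have hy₂ : y₂ = 0 := by
      refine factA l hgen (A := K₂) (by rw [hc₂]; omega) fun i hi => ?_
      rw [hK2, Finset.mem_union] at hi
      rcases hi with h | h
      · have := hz i; rw [Gmap_apply_of_mem12 l _ _ h] at this
        rw [← e12 i h]; exact this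
      · have := hz i
        rwa [Gmap_apply_of_mem23 l _ _ (Finset.disjoint_right.mp hd1223 h) h] at this
    have hy₃ : y₃ = 0 := by
      refine factA l hgen (A := K₃) (by rw [hc₃]; omega) fun i hi => ?_
      rw [hK3, Finset.mem_union] at hi
      rcases hi with h | h
      · have := hz i
        rwa [Gmap_apply_of_mem13 l _ _ (Finset.disjoint_right.mp hd1213 h)
          (Finset.disjoint_left.mp hd1323 h)] at this
      · have := hz i
        rw [Gmap_apply_of_mem23 l _ _ (Finset.disjoint_right.mp hd1223 h) h] at this
        rw [← e23 i h]; exact this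
    simp [hy₁, hy₂, hy₃, Prod.ext_iff]
  -- dimension of the intersection equals dimension of T
  have hDdim : finrank ℂ ↥(DD l K₁ ⊓ DD l K₂ ⊓ DD l K₃) =
      finrank ℂ ↥(Tsub W₁₂ W₂₃ W₁₃) := by
    rw [hDmap]
    set f := (Gmap l (K₁ ∩ K₂) (K₂ ∩ K₃)).comp (Tsub W₁₂ W₂₃ W₁₃).subtype with hf
    have hfinj : Function.Injective f := by
      rw [← LinearMap.ker_eq_bot, eq_bot_iff]
      rintro ⟨z, hz⟩ hfz
      rw [LinearMap.mem_ker] at hfz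
      have hz0 : z = 0 := hinjG z hz hfz
      simpa [Submodule.mem_bot, Subtype.ext_iff] using hz0
    have hr := LinearMap.finrank_range_of_inj hfinj
    rw [hf, LinearMap.range_comp, Submodule.range_subtype] at hr
    exact hr
  constructor
  · intro hne
    have hwne : finrank ℂ ↥(W₁₂ ⊔ W₁₃ ⊔ W₂₃) ≠ 2 * s - 1 := fun h =>
      hne (Submodule.eq_top_of_finrank_eq (by rw [h, Module.finrank_fin_fun]))
    omega
  · intro heq
    have hw : finrank ℂ ↥(W₁₂ ⊔ W₁₃ ⊔ W₂₃) = 2 * s - 1 := by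
      rw [heq, finrank_top, Module.finrank_fin_fun]
    omega
end

section
/- If k ≥ 3 and n ≥ k + 3, then there exist linear functionals l_1, …, l_n : ℂ^k → ℂ, every k of which are linearly independent, such that the associated discriminantal arrangement B(n, k) admits a codimension-2 stratum of multiplicity 3, i.e. there exist three pairwise distinct (k+1)-element subsets K_1, K_2, K_3 of {1, …, n} with |K_1 ∪ K_2 ∪ K_3| ≥ k + 3 such that D_{K_1} ∩ D_{K_2} ∩ D_{K_3} has codimension 2 in ℂ^n. -/
/-
Take `l i (y) = ∑ p, t_i ^ p * y p` on the moment curve with `t_i = i`; any `k` of them are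
independent (Vandermonde). Fix `k + 3` indices `s` and a pair `T ⊆ s`. For `p < k` the divided
difference over `s` of `P * X ^ p`, with `P = ∏_{j ∈ T} (X - t_j)` the nodal polynomial of `T`,
vanishes since its degree is below `#s - 1`; this is a relation among the `k + 1` functionals
indexed by `s \ T`, with coefficients `P(t_i) * w_i` where `w_i = ∏_{j ∈ s, j ≠ i} (t_i - t_j)⁻¹`.
Hence `D_{s \ T}` is the kernel of `x ↦ ∑_{i ∈ s} P(t_i) w_i x_i`, which is linear in `P`.
The pairs `{0, 5}, {1, 4}, {2, 3}` have equal sums, so their nodal polynomials satisfy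
`X (X - 5) - 3 (X - 1) (X - 4) + 2 (X - 2) (X - 3) = 0`: the three normals are dependent while
the first two are not, and the three hyperplanes meet in codimension `2`.
-/

open Module Submodule

open Polynomial Finset Lagrange

section Duality

variable {F V : Type*} [Field F] [AddCommGroup V] [Module F V]

theorem LinearMap.surjective_pi_of_linearIndependent {ι : Type*} [Finite ι]
    {f : ι → Dual F V} (hf : LinearIndependent F f) : Function.Surjective (LinearMap.pi f) := by
  classical
  have := Fintype.ofFinite ι
  rw [← LinearMap.dualMap_injective_iff, injective_iff_map_eq_zero]
  intro φ hφ
  have hcomb : ∑ i, φ (fun j => if i = j then 1 else 0) • f i = 0 := by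
    ext y
    have hy := LinearMap.congr_fun hφ y
    rw [LinearMap.dualMap_apply, LinearMap.pi_apply_eq_sum_univ] at hy
    simpa [mul_comm] using hy
  have hzero := Fintype.linearIndependent_iff.mp hf _ hcomb
  refine LinearMap.ext fun z => ?_
  simp [LinearMap.pi_apply_eq_sum_univ φ z, hzero]

theorem ker_inf_ker_le_ker_of_smul_add_smul_add_smul_eq_zero {f g h : Dual F V} {a b c : F}
    (hfgh : a • f + b • g + c • h = 0) (hc : c ≠ 0) :
    LinearMap.ker f ⊓ LinearMap.ker g ≤ LinearMap.ker h := by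
  rintro x ⟨hf, hg⟩
  have hx : c * h x = 0 := by
    simpa [LinearMap.mem_ker.mp hf, LinearMap.mem_ker.mp hg] using LinearMap.congr_fun hfgh x
  exact (mul_eq_zero.mp hx).resolve_left hc

theorem finrank_ker_inf_ker [FiniteDimensional F V] {f g : Dual F V}
    (h : LinearIndependent F ![f, g]) :
    finrank F ↥(LinearMap.ker f ⊓ LinearMap.ker g) = finrank F V - 2 := by
  have hker :
      LinearMap.ker f ⊓ LinearMap.ker g = (span F (Set.range ![f, g])).dualCoannihilator := by
    apply SetLike.coe_injective
    rw [coe_dualCoannihilator_span]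
    ext x
    simp [and_comm]
  have hspan := finrank_span_eq_card h
  have := Subspace.finrank_add_finrank_dualCoannihilator_eq (span F (Set.range ![f, g]))
  rw [hker]
  simp only [hspan, Fintype.card_fin] at this
  omega

theorem linearIndependent_pair_of_apply {f g : Dual F V} {x y : V}
    (hfx : f x = 0) (hgx : g x ≠ 0) (hfy : f y ≠ 0) (hgy : g y = 0) :
    LinearIndependent F ![f, g] := by
  refine LinearIndependent.pair_iff.mpr fun a b hab => ?_
  have hx := LinearMap.congr_fun hab x
  have hy := LinearMap.congr_fun hab y
  simp only [LinearMap.add_apply, LinearMap.smul_apply, smul_eq_mul, LinearMap.zero_apply,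
    hfx, hgy, mul_zero, zero_add, add_zero, mul_eq_zero] at hx hy
  exact ⟨hy.resolve_right hfy, hx.resolve_right hgx⟩

end Duality

theorem mem_DD {ι V : Type*} [AddCommGroup V] [Module ℂ V] {l : ι → Dual ℂ V} {J : Finset ι}
    {x : ι → ℂ} : x ∈ DD l J ↔ ∃ y, ∀ i ∈ J, x i = l i y :=
  Iff.rfl

theorem DD_eq_ker_of_relation {ι V : Type*} [DecidableEq ι] [AddCommGroup V] [Module ℂ V]
    {l : ι → Dual ℂ V} {K : Finset ι} {i₀ : ι} (hi₀ : i₀ ∈ K)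
    (hli : LinearIndependent ℂ (fun i : K.erase i₀ => l i)) {r : ι → ℂ}
    (hrel : ∑ i ∈ K, r i • l i = 0) (hr : r i₀ ≠ 0) :
    DD l K = LinearMap.ker (∑ i ∈ K, r i • (LinearMap.proj i : (ι → ℂ) →ₗ[ℂ] ℂ)) := by
  ext x
  simp only [mem_DD, LinearMap.mem_ker, LinearMap.coe_sum, Finset.sum_apply,
    LinearMap.smul_apply, LinearMap.proj_apply, smul_eq_mul]
  constructor
  · rintro ⟨y, hy⟩
    rw [sum_congr rfl fun i hi => by rw [hy i hi]]
    simpa using LinearMap.congr_fun hrel y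
  · intro hx
    obtain ⟨y, hy⟩ := LinearMap.surjective_pi_of_linearIndependent hli fun i => x i
    have hyK : ∀ i ∈ K.erase i₀, x i = l i y := fun i hi => (congrFun hy ⟨i, hi⟩).symm
    have hdiff : ∑ i ∈ K, r i * (x i - l i y) = 0 := by
      simpa [mul_sub, sum_sub_distrib, hx] using LinearMap.congr_fun hrel y
    rw [sum_eq_single_of_mem i₀ hi₀ fun i hi hne => by
      rw [hyK i (mem_erase.2 ⟨hne, hi⟩), sub_self, mul_zero]] at hdiff
    refine ⟨y, fun i hi => ?_⟩
    rcases eq_or_ne i i₀ with rfl | hne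
    · exact sub_eq_zero.mp ((mul_eq_zero.mp hdiff).resolve_left hr)
    · exact hyK i (mem_erase.2 ⟨hne, hi⟩)

section Moment

variable (F : Type*) [Field F]

noncomputable def momentFunctional (k : ℕ) (t : F) : Dual F (Fin k → F) :=
  dotProductEquiv F (Fin k) fun p => t ^ (p : ℕ)

variable {F}

theorem linearIndependent_momentFunctional {ι : Type*} {k : ℕ} {S : Finset ι} (hS : #S = k)
    {v : ι → F} (hv : Set.InjOn v S) :
    LinearIndependent F (fun i : S => momentFunctional F k (v i)) := by
  let e : S ≃ Fin k := S.equivFin.trans (finCongr hS)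
  have hrows : LinearIndependent F (fun i : S => fun p : Fin k => v i ^ (p : ℕ)) := by
    have hfun : (fun i : S => fun p : Fin k => v i ^ (p : ℕ)) =
        Matrix.vandermonde (fun q => v (e.symm q)) ∘ e := by
      funext i p
      change _ = Matrix.vandermonde _ (e i) p
      simp [Matrix.vandermonde_apply]
    rw [hfun]
    exact (Matrix.linearIndependent_rows_of_det_ne_zero <| Matrix.det_vandermonde_ne_zero_iff.mpr <|
      hv.injective.comp e.symm.injective).comp e e.injective
  exact hrows.map' _ (dotProductEquiv F (Fin k)).ker

variable {ι : Type*} [DecidableEq ι] {s : Finset ι} {v : ι → F}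

theorem sum_eval_mul_nodalWeight_eq_zero (hv : Set.InjOn v s) {P : F[X]}
    (hP : P.natDegree + 1 < #s) : ∑ i ∈ s, P.eval (v i) * nodalWeight s v i = 0 := by
  have h := coeff_eq_sum hv (P := P) (degree_le_natDegree.trans_lt (by exact_mod_cast (by omega)))
  rw [coeff_eq_zero_of_natDegree_lt (by omega)] at h
  simp [nodalWeight, div_eq_mul_inv, prod_inv_distrib, h]

theorem sum_smul_momentFunctional_eq_zero (hv : Set.InjOn v s) {k : ℕ} {P : F[X]}
    (hP : P.natDegree + k < #s) :
    ∑ i ∈ s, (P.eval (v i) * nodalWeight s v i) • momentFunctional F k (v i) = 0 := by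
  refine LinearMap.pi_ext' fun p => LinearMap.ext_ring ?_
  have hdeg : (P * X ^ (p : ℕ)).natDegree + 1 < #s :=
    calc (P * X ^ (p : ℕ)).natDegree + 1 ≤ P.natDegree + p + 1 := by
          gcongr; exact natDegree_mul_le.trans (Nat.add_le_add_left (natDegree_X_pow_le _) _)
      _ < #s := by omega
  simpa [momentFunctional, mul_right_comm] using sum_eval_mul_nodalWeight_eq_zero hv hdeg

noncomputable def nodalForm (s : Finset ι) (v : ι → F) : F[X] →ₗ[F] Dual F (ι → F) :=
  ∑ i ∈ s, (leval (v i)).smulRight (nodalWeight s v i • LinearMap.proj i)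

theorem nodalForm_apply (P : F[X]) :
    nodalForm s v P = ∑ i ∈ s, (P.eval (v i) * nodalWeight s v i) • LinearMap.proj i := by
  simp [nodalForm, mul_smul]

theorem nodalForm_apply_single {P : F[X]} {j : ι} (hj : j ∈ s) :
    nodalForm s v P (Pi.single j 1) = P.eval (v j) * nodalWeight s v j := by
  simp [nodalForm_apply, Pi.single_apply, hj]

theorem nodalForm_nodal_apply_single_eq_zero_iff (hv : Set.InjOn v s) {T : Finset ι}
    (hT : T ⊆ s) {j : ι} (hj : j ∈ s) :
    nodalForm s v (nodal T v) (Pi.single j 1) = 0 ↔ j ∈ T := by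
  rw [nodalForm_apply_single hj, mul_eq_zero, or_iff_left (nodalWeight_ne_zero hv hj), eval_nodal,
    prod_eq_zero_iff]
  simp only [sub_eq_zero]
  exact ⟨fun ⟨i, hi, hji⟩ => hv hj (hT hi) hji ▸ hi, fun hjT => ⟨j, hjT, rfl⟩⟩

theorem nodal_pair {a b : ι} (hab : a ≠ b) : nodal {a, b} v = (X - C (v a)) * (X - C (v b)) := by
  rw [nodal_eq, prod_pair hab]

theorem linearIndependent_nodalForm_nodal_pair (hv : Set.InjOn v s) {T₁ T₂ : Finset ι}
    (hT₁ : T₁ ⊆ s) (hT₂ : T₂ ⊆ s) (hne₁ : T₁.Nonempty) (hne₂ : T₂.Nonempty)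
    (hdisj : Disjoint T₁ T₂) :
    LinearIndependent F ![nodalForm s v (nodal T₁ v), nodalForm s v (nodal T₂ v)] := by
  obtain ⟨x, hx⟩ := hne₁
  obtain ⟨y, hy⟩ := hne₂
  have hz {T : Finset ι} (hT : T ⊆ s) {j : ι} (hj : j ∈ s) :=
    nodalForm_nodal_apply_single_eq_zero_iff hv hT hj
  refine linearIndependent_pair_of_apply (x := Pi.single x 1) (y := Pi.single y 1)
    ((hz hT₁ (hT₁ hx)).2 hx) ?_ ?_ ((hz hT₂ (hT₂ hy)).2 hy)
  · rw [Ne, hz hT₂ (hT₁ hx)]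
    exact disjoint_left.1 hdisj hx
  · rw [Ne, hz hT₁ (hT₂ hy)]
    exact disjoint_right.1 hdisj hy

end Moment

section Discriminantal

variable {ι : Type*} [DecidableEq ι] {k : ℕ} {v : ι → ℂ} {s : Finset ι}

theorem DD_momentFunctional_eq_ker_nodalForm {K : Finset ι} (hv : Set.InjOn v s) (hKs : K ⊆ s)
    (hK : #K = k + 1) :
    DD (fun i => momentFunctional ℂ k (v i)) K =
      LinearMap.ker (nodalForm s v (nodal (s \ K) v)) := by
  set r : ι → ℂ := fun i => (nodal (s \ K) v).eval (v i) * nodalWeight s v i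
  have hr : ∀ i ∈ s, r i = 0 ↔ i ∉ K := fun i hi => by
    change (nodal (s \ K) v).eval (v i) * nodalWeight s v i = 0 ↔ i ∉ K
    rw [← nodalForm_apply_single hi, nodalForm_nodal_apply_single_eq_zero_iff hv sdiff_subset hi,
      mem_sdiff, and_iff_right hi]
  have hsupp : ∀ i ∈ s, i ∉ K → r i = 0 := fun i hi => (hr i hi).2
  obtain ⟨i₀, hi₀⟩ : K.Nonempty := card_pos.mp (by omega)
  have hcard : #(K.erase i₀) = k := by rw [card_erase_of_mem hi₀, hK, Nat.add_sub_cancel]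
  have hli := linearIndependent_momentFunctional hcard
    (hv.mono (coe_subset.2 ((erase_subset i₀ K).trans hKs)))
  have hrel : ∑ i ∈ K, r i • momentFunctional ℂ k (v i) = 0 := by
    rw [sum_subset hKs fun i hi hiK => by rw [hsupp i hi hiK, zero_smul]]
    refine sum_smul_momentFunctional_eq_zero hv ?_
    rw [natDegree_nodal, card_sdiff_of_subset hKs]
    have := card_le_card hKs
    omega
  have hform : nodalForm s v (nodal (s \ K) v) = ∑ i ∈ K, r i • LinearMap.proj i := by
    rw [nodalForm_apply, sum_subset hKs fun i hi hiK => by rw [hsupp i hi hiK, zero_smul]]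
  have hr₀ : r i₀ ≠ 0 := fun h => (hr i₀ (hKs hi₀)).1 h hi₀
  rw [hform]
  exact DD_eq_ker_of_relation (l := fun i => momentFunctional ℂ k (v i)) hi₀ hli hrel hr₀

theorem finrank_DD_inf_DD_inf_DD_of_nodal_relation [Fintype ι] {T₁ T₂ T₃ : Finset ι}
    (hv : Set.InjOn v s) (hs : #s = k + 3)
    (hT₁ : T₁ ⊆ s) (hT₂ : T₂ ⊆ s) (hT₃ : T₃ ⊆ s) (h₁ : #T₁ = 2) (h₂ : #T₂ = 2) (h₃ : #T₃ = 2)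
    (hdisj : Disjoint T₁ T₂) {a b c : ℂ}
    (hrel : a • nodal T₁ v + b • nodal T₂ v + c • nodal T₃ v = 0) (hc : c ≠ 0) :
    finrank ℂ ↥(DD (fun i => momentFunctional ℂ k (v i)) (s \ T₁) ⊓
      DD (fun i => momentFunctional ℂ k (v i)) (s \ T₂) ⊓
      DD (fun i => momentFunctional ℂ k (v i)) (s \ T₃)) = Fintype.card ι - 2 := by
  have hDD {T : Finset ι} (hT : T ⊆ s) (h : #T = 2) :
      DD (fun i => momentFunctional ℂ k (v i)) (s \ T) =
        LinearMap.ker (nodalForm s v (nodal T v)) := by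
    rw [DD_momentFunctional_eq_ker_nodalForm hv sdiff_subset
      (by rw [card_sdiff_of_subset hT, hs, h]; rfl), Finset.sdiff_sdiff_eq_self hT]
  have hform : a • nodalForm s v (nodal T₁ v) + b • nodalForm s v (nodal T₂ v) +
      c • nodalForm s v (nodal T₃ v) = 0 := by
    rw [← map_smul, ← map_smul, ← map_smul, ← map_add, ← map_add, hrel, map_zero]
  rw [hDD hT₁ h₁, hDD hT₂ h₂, hDD hT₃ h₃,
    inf_eq_left.mpr (ker_inf_ker_le_ker_of_smul_add_smul_add_smul_eq_zero hform hc),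
    finrank_ker_inf_ker (linearIndependent_nodalForm_nodal_pair hv hT₁ hT₂
      (card_pos.1 (by omega)) (card_pos.1 (by omega)) hdisj), finrank_fintype_fun_eq_card]

theorem exists_codim_two_stratum_of_nodal_relation [Fintype ι] {T₁ T₂ T₃ : Finset ι}
    (hv : Set.InjOn v s) (hs : #s = k + 3)
    (hT₁ : T₁ ⊆ s) (hT₂ : T₂ ⊆ s) (hT₃ : T₃ ⊆ s) (h₁ : #T₁ = 2) (h₂ : #T₂ = 2) (h₃ : #T₃ = 2)
    (h₁₂ : Disjoint T₁ T₂) (h₁₃ : Disjoint T₁ T₃) (h₂₃ : Disjoint T₂ T₃) {a b c : ℂ}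
    (hrel : a • nodal T₁ v + b • nodal T₂ v + c • nodal T₃ v = 0) (hc : c ≠ 0) :
    ∃ K₁ K₂ K₃ : Finset ι,
      K₁ ≠ K₂ ∧ K₁ ≠ K₃ ∧ K₂ ≠ K₃ ∧ #K₁ = k + 1 ∧ #K₂ = k + 1 ∧ #K₃ = k + 1 ∧
      k + 3 ≤ #(K₁ ∪ K₂ ∪ K₃) ∧
      finrank ℂ ↥(DD (fun i => momentFunctional ℂ k (v i)) K₁ ⊓
        DD (fun i => momentFunctional ℂ k (v i)) K₂ ⊓
        DD (fun i => momentFunctional ℂ k (v i)) K₃) = Fintype.card ι - 2 := by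
  have hne {T T' : Finset ι} (hT : T ⊆ s) (hT' : T' ⊆ s) (hd : Disjoint T T') (h : #T = 2) :
      s \ T ≠ s \ T' :=
    fun h' => hd.ne (by rintro rfl; simp at h) ((sdiff_right_inj hT hT').1 h')
  have hcard {T : Finset ι} (hT : T ⊆ s) (h : #T = 2) : #(s \ T) = k + 1 := by
    rw [card_sdiff_of_subset hT, hs, h]; rfl
  refine ⟨s \ T₁, s \ T₂, s \ T₃, hne hT₁ hT₂ h₁₂ h₁, hne hT₁ hT₃ h₁₃ h₁, hne hT₂ hT₃ h₂₃ h₂,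
    hcard hT₁ h₁, hcard hT₂ h₂, hcard hT₃ h₃, ?_,
    finrank_DD_inf_DD_inf_DD_of_nodal_relation hv hs hT₁ hT₂ hT₃ h₁ h₂ h₃ h₁₂ hrel hc⟩
  rw [← hs, ← sdiff_inter_distrib_right, disjoint_iff_inter_eq_empty.1 h₁₂, sdiff_empty]
  exact card_le_card subset_union_left

end Discriminantal

/-- Corollary `inequality`: for `k ≥ 3` and `n ≥ k + 3` there exists a generic
arrangement (every `k` of the functionals linearly independent) whose discriminantal
arrangement `B(n, k)` admits a codimension-2 stratum of multiplicity 3. -/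
theorem stmt5 (k n : ℕ) (hk : 3 ≤ k) (hn : k + 3 ≤ n) :
    ∃ l : Fin n → Module.Dual ℂ (Fin k → ℂ),
      (∀ S : Finset (Fin n), S.card = k → LinearIndependent ℂ (fun i : S => l i.1)) ∧
      ∃ K₁ K₂ K₃ : Finset (Fin n),
        K₁ ≠ K₂ ∧ K₁ ≠ K₃ ∧ K₂ ≠ K₃ ∧
        K₁.card = k + 1 ∧ K₂.card = k + 1 ∧ K₃.card = k + 1 ∧
        k + 3 ≤ (K₁ ∪ K₂ ∪ K₃).card ∧
        Module.finrank ℂ ↥(DD l K₁ ⊓ DD l K₂ ⊓ DD l K₃) = n - 2 := by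
  set v : Fin n → ℂ := fun i => ((i : ℕ) : ℂ)
  have hv : Function.Injective v := fun i j h => Fin.ext (Nat.cast_injective h)
  set s : Finset (Fin n) := {i | (i : ℕ) < k + 3}
  have hs : #s = k + 3 := by simp only [s, Fin.card_filter_val_lt]; omega
  set e : Fin 6 ↪ Fin n := Fin.castLEEmb (by omega)
  have hpair (a b : Fin 6) (hab : a ≠ b) : {e a, e b} ⊆ s ∧ #{e a, e b} = 2 := by
    refine ⟨?_, card_pair (e.injective.ne hab)⟩
    simp only [insert_subset_iff, singleton_subset_iff, s, mem_filter, mem_univ, true_and, e,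
      Fin.castLEEmb_apply, Fin.val_castLE]
    omega
  obtain ⟨hT₁, h₁⟩ := hpair 0 5 (by decide)
  obtain ⟨hT₂, h₂⟩ := hpair 1 4 (by decide)
  obtain ⟨hT₃, h₃⟩ := hpair 2 3 (by decide)
  have hpoly : (1 : ℂ) • nodal {e 0, e 5} v + (-3 : ℂ) • nodal {e 1, e 4} v
      + (2 : ℂ) • nodal {e 2, e 3} v = 0 := by
    rw [nodal_pair (e.injective.ne (show (0 : Fin 6) ≠ 5 by decide)),
      nodal_pair (e.injective.ne (show (1 : Fin 6) ≠ 4 by decide)),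
      nodal_pair (e.injective.ne (show (2 : Fin 6) ≠ 3 by decide))]
    simp only [v, e, Fin.castLEEmb_apply, Fin.val_castLE, Fin.isValue, Fin.coe_ofNat_eq_mod,
      Nat.reduceMod, Nat.cast_ofNat, CharP.cast_eq_zero, Nat.cast_one, map_zero, map_one,
      map_neg, map_ofNat, smul_eq_C_mul]
    ring
  have hstratum := exists_codim_two_stratum_of_nodal_relation hv.injOn hs hT₁ hT₂ hT₃ h₁ h₂ h₃
    (by simp [e.injective.eq_iff]) (by simp [e.injective.eq_iff]) (by simp [e.injective.eq_iff])
    hpoly two_ne_zero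
  rw [Fintype.card_fin] at hstratum
  exact ⟨fun i => momentFunctional ℂ k (v i),
    fun S hS => linearIndependent_momentFunctional hS hv.injOn, hstratum⟩
end

section
/- Assume n ≥ k + 2. For every subset J ⊆ {1, …, n} with |J| = k + 2, the subspace D_J has codimension 2 in ℂ^n, and the (k+1)-element subsets K of {1, …, n} with D_J ⊆ D_K are exactly the k + 2 subsets K ⊆ J of cardinality k + 1. Consequently the discriminantal arrangement B(n, k) has exactly C(n, k+2) codimension-2 strata of multiplicity k + 2. -/
/-!
Genericity makes `y ↦ (l i y)_{i ∈ J}` injective as soon as `|J| ≥ k`, so `D_J ≅ ℂ^k × ℂ^{Jᶜ}`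
has dimension `k + n - |J|`, and `D_{K₁} ∩ D_{K₂} = D_{K₁ ∪ K₂}` when `|K₁ ∩ K₂| ≥ k`. The unit
vector `e_i` lies in `D_J` for `i ∉ J` but not in `D_K` for `i ∈ K`, `|K| > k`; hence
`D_J ≤ D_K ↔ K ⊆ J`.

Conversely, let `P` have codimension 2 and lie on exactly `k + 2` hyperplanes `D_K`, and put
`J = {j | e_j ∉ P}`. Every such `K` is contained in `J`, and each `j ∈ J` lies outside at most
one of them, because a hyperplane containing `P` and `e_j ∉ P` is `P + ℂ e_j`. Counting the
disjoint sets `J \ K` gives `(k + 2)(|J| - k - 1) ≤ |J|`, so `|J| = k + 2`, and `P = D_J` by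
comparing dimensions.
-/

open Module Submodule

theorem Submodule.eq_of_le_of_mem_of_finrank_eq_succ {K E : Type*} [DivisionRing K]
    [AddCommGroup E] [Module K E] [FiniteDimensional K E] {P A B : Submodule K E}
    (hPA : P ≤ A) (hPB : P ≤ B) {x : E} (hxA : x ∈ A) (hxB : x ∈ B) (hxP : x ∉ P)
    (hA : finrank K A = finrank K P + 1) (hB : finrank K B = finrank K P + 1) : A = B := by
  have hlt : P < A ⊓ B :=
    SetLike.lt_iff_le_and_exists.2 ⟨le_inf hPA hPB, x, mem_inf.2 ⟨hxA, hxB⟩, hxP⟩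
  have hP := Submodule.finrank_lt_finrank_of_lt hlt
  have hAB : A ⊓ B = A := Submodule.eq_of_le_of_finrank_le inf_le_left (by omega)
  have hBA : A ⊓ B = B := Submodule.eq_of_le_of_finrank_le inf_le_right (by omega)
  rw [← hAB, hBA]

theorem Finset.card_lt_card_union_of_card_eq_of_ne {α : Type*} [DecidableEq α]
    {s t : Finset α} (hst : s.card = t.card) (hne : s ≠ t) : s.card < (s ∪ t).card := by
  refine Finset.card_lt_card (Finset.ssubset_iff_subset_ne.2 ⟨Finset.subset_union_left, ?_⟩)
  intro h
  exact hne (Finset.eq_of_subset_of_card_le (Finset.union_eq_left.1 h.symm) hst.le).symm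

theorem Finset.card_mul_sub_le_of_pairwiseDisjoint_sdiff {α : Type*} [DecidableEq α]
    {T : Finset (Finset α)} {J : Finset α} {m : ℕ} (hT : ∀ K ∈ T, K ⊆ J ∧ K.card = m)
    (hdisj : (T : Set (Finset α)).PairwiseDisjoint (J \ ·)) : T.card * (J.card - m) ≤ J.card :=
  calc T.card * (J.card - m) = ∑ K ∈ T, (J \ K).card := by
        rw [Finset.sum_congr rfl fun K hK => by
          rw [Finset.card_sdiff_of_subset (hT K hK).1, (hT K hK).2], Finset.sum_const, smul_eq_mul]
    _ = (T.biUnion (J \ ·)).card := (Finset.card_biUnion hdisj).symm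
    _ ≤ J.card := Finset.card_le_card (Finset.biUnion_subset.2 fun _ _ => Finset.sdiff_subset)

theorem Finset.ncard_setOf_subset_card_eq {α : Type*} (s : Finset α) (m : ℕ) :
    {t : Finset α | t ⊆ s ∧ t.card = m}.ncard = s.card.choose m := by
  rw [← Finset.card_powersetCard, ← Set.ncard_coe_finset]
  congr 1
  ext t
  simp

section DD

variable {ι V : Type*} [AddCommGroup V] [Module ℂ V] {l : ι → Module.Dual ℂ V}

theorem DD_antitone {J K : Finset ι} (h : K ⊆ J) : DD l J ≤ DD l K :=
  fun _ ⟨y, hy⟩ => ⟨y, fun i hi => hy i (h hi)⟩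

theorem single_mem_DD [DecidableEq ι] {J : Finset ι} {i : ι} (hi : i ∉ J) (a : ℂ) :
    Pi.single i a ∈ DD l J :=
  ⟨0, fun j hj => by rw [map_zero, Pi.single_eq_of_ne (ne_of_mem_of_not_mem hj hi)]⟩

def GeneralPosition (l : ι → Module.Dual ℂ V) : Prop :=
  ∀ S : Finset ι, S.card = finrank ℂ V → LinearIndependent ℂ fun i : S => l i

namespace GeneralPosition

variable [FiniteDimensional ℂ V]

theorem eq_zero_of_forall_apply_eq_zero (hl : GeneralPosition l) {S : Finset ι}
    (hS : finrank ℂ V ≤ S.card) {y : V} (hy : ∀ i ∈ S, l i y = 0) : y = 0 := by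
  obtain ⟨S', hS', hcard⟩ := Finset.exists_subset_card_eq hS
  have hspan : span ℂ (Set.range fun i : S' => l i) = ⊤ :=
    (hl S' hcard).span_eq_top_of_card_eq_finrank' (by simp [hcard])
  have hker : span ℂ (Set.range fun i : S' => l i) ≤ LinearMap.ker (Module.Dual.eval ℂ V y) :=
    span_le.2 <| by rintro _ ⟨i, rfl⟩; exact hy i (hS' i.2)
  rw [hspan] at hker
  exact (Module.forall_dual_apply_eq_zero_iff ℂ y).1 fun φ => hker mem_top

variable [DecidableEq ι]

theorem single_notMem_DD (hl : GeneralPosition l) {K : Finset ι} (hK : finrank ℂ V < K.card)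
    {i : ι} (hi : i ∈ K) : Pi.single i 1 ∉ DD l K := by
  rintro ⟨y, hy⟩
  have hy0 : y = 0 := by
    refine hl.eq_zero_of_forall_apply_eq_zero (S := K.erase i)
      (by rw [Finset.card_erase_of_mem hi]; omega) fun j hj => ?_
    rw [← hy j (Finset.mem_of_mem_erase hj), Pi.single_eq_of_ne (Finset.ne_of_mem_erase hj)]
  simpa [hy0] using hy i hi

theorem DD_le_DD_iff (hl : GeneralPosition l) {J K : Finset ι} (hK : finrank ℂ V < K.card) :
    DD l J ≤ DD l K ↔ K ⊆ J := by
  refine ⟨fun h i hiK => ?_, DD_antitone⟩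
  by_contra hiJ
  exact hl.single_notMem_DD hK hiK (h (single_mem_DD hiJ 1))

theorem setOf_DD_le_DD (hl : GeneralPosition l) (J : Finset ι) :
    {K : Finset ι | K.card = finrank ℂ V + 1 ∧ DD l J ≤ DD l K} =
      {K | K ⊆ J ∧ K.card = finrank ℂ V + 1} := by
  ext K
  exact ⟨fun ⟨hK, h⟩ => ⟨(hl.DD_le_DD_iff (by omega)).1 h, hK⟩,
    fun ⟨h, hK⟩ => ⟨hK, DD_antitone h⟩⟩

theorem DD_injOn (hl : GeneralPosition l) : Set.InjOn (DD l) {J | finrank ℂ V < J.card} :=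
  fun _ hJ _ hJ' h => le_antisymm ((hl.DD_le_DD_iff hJ).1 h.ge) ((hl.DD_le_DD_iff hJ').1 h.le)

theorem DD_union (hl : GeneralPosition l) {K₁ K₂ : Finset ι}
    (hK : finrank ℂ V ≤ (K₁ ∩ K₂).card) : DD l (K₁ ∪ K₂) = DD l K₁ ⊓ DD l K₂ := by
  refine le_antisymm (le_inf (DD_antitone Finset.subset_union_left)
    (DD_antitone Finset.subset_union_right)) ?_
  rintro x ⟨⟨y₁, h₁⟩, ⟨y₂, h₂⟩⟩
  have hy : y₁ - y₂ = 0 := hl.eq_zero_of_forall_apply_eq_zero hK fun i hi => by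
    rw [map_sub, ← h₁ i (Finset.mem_inter.1 hi).1, ← h₂ i (Finset.mem_inter.1 hi).2, sub_self]
  refine ⟨y₁, fun i hi => ?_⟩
  rcases Finset.mem_union.1 hi with hi | hi
  · exact h₁ i hi
  · rw [sub_eq_zero.1 hy]; exact h₂ i hi

theorem DD_eq_inf (hl : GeneralPosition l) {J K₁ K₂ : Finset ι}
    (hJ : J.card = finrank ℂ V + 2) (h₁ : K₁ ⊆ J) (h₂ : K₂ ⊆ J)
    (hK₁ : K₁.card = finrank ℂ V + 1) (hK₂ : K₂.card = finrank ℂ V + 1) (hne : K₁ ≠ K₂) :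
    DD l J = DD l K₁ ⊓ DD l K₂ := by
  have hlt := Finset.card_lt_card_union_of_card_eq_of_ne (hK₁.trans hK₂.symm) hne
  have hle := Finset.card_le_card (Finset.union_subset h₁ h₂)
  have hunion : K₁ ∪ K₂ = J :=
    Finset.eq_of_subset_of_card_le (Finset.union_subset h₁ h₂) (by omega)
  have hinter := Finset.card_union_add_card_inter K₁ K₂
  rw [← hunion, hl.DD_union (by omega)]

variable [Fintype ι]

theorem finrank_DD (hl : GeneralPosition l) {J : Finset ι} (hJ : finrank ℂ V ≤ J.card) :
    finrank ℂ (DD l J) = finrank ℂ V + (Fintype.card ι - J.card) := by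
  let Φ : V × (↥Jᶜ → ℂ) →ₗ[ℂ] ι → ℂ := LinearMap.pi fun i =>
    if h : i ∈ J then l i ∘ₗ LinearMap.fst ℂ V _
    else LinearMap.proj ⟨i, Finset.mem_compl.2 h⟩ ∘ₗ LinearMap.snd ℂ V _
  have hΦ (p : V × (↥Jᶜ → ℂ)) (i : ι) :
      Φ p i = if h : i ∈ J then l i p.1 else p.2 ⟨i, Finset.mem_compl.2 h⟩ := by
    simp only [Φ, LinearMap.pi_apply]
    split_ifs <;> rfl
  have hrange : LinearMap.range Φ = DD l J := by
    ext x
    refine ⟨?_, fun ⟨y, hy⟩ => ⟨(y, fun i => x i), funext fun i => ?_⟩⟩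
    · rintro ⟨p, rfl⟩
      exact ⟨p.1, fun i hi => by rw [hΦ, dif_pos hi]⟩
    · rw [hΦ]
      split_ifs with h
      exacts [(hy i h).symm, rfl]
  have hinj : Function.Injective Φ := by
    rw [← LinearMap.ker_eq_bot, LinearMap.ker_eq_bot']
    intro p hp
    refine Prod.ext (hl.eq_zero_of_forall_apply_eq_zero hJ fun i hi => ?_) (funext fun i => ?_)
    · simpa [hΦ, hi] using congrFun hp i
    · simpa [hΦ, Finset.mem_compl.1 i.2] using congrFun hp i
  rw [← hrange, LinearMap.finrank_range_of_inj hinj, Module.finrank_prod, Module.finrank_pi,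
    Fintype.card_coe, Finset.card_compl]

theorem exists_DD_eq (hl : GeneralPosition l) {P : Submodule ℂ (ι → ℂ)}
    (hP : finrank ℂ P = Fintype.card ι - 2)
    (hT : {K : Finset ι | K.card = finrank ℂ V + 1 ∧ P ≤ DD l K}.ncard = finrank ℂ V + 2) :
    ∃ J : Finset ι, J.card = finrank ℂ V + 2 ∧ DD l J = P := by
  classical
  set k := finrank ℂ V
  set T : Finset (Finset ι) := {K | K.card = k + 1 ∧ P ≤ DD l K}
  have hmemT {K : Finset ι} : K ∈ T ↔ K.card = k + 1 ∧ P ≤ DD l K := by simp [T]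
  have hTcard : T.card = k + 2 := by
    rw [← hT, ← Set.ncard_coe_finset]
    congr 1
    ext K
    exact hmemT
  obtain ⟨K₁, h₁, K₂, h₂, hne⟩ := Finset.one_lt_card.1 (by omega : 1 < T.card)
  obtain ⟨⟨hK₁, hPK₁⟩, ⟨hK₂, hPK₂⟩⟩ := And.intro (hmemT.1 h₁) (hmemT.1 h₂)
  have hunion := Finset.card_lt_card_union_of_card_eq_of_ne (hK₁.trans hK₂.symm) hne
  have hN := Finset.card_le_univ (K₁ ∪ K₂)
  have hlt {K : Finset ι} (hK : K ∈ T) : k < K.card := by rw [(hmemT.1 hK).1]; omega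
  have hfinrank {K : Finset ι} (hK : K ∈ T) : finrank ℂ (DD l K) = finrank ℂ P + 1 := by
    rw [hl.finrank_DD (hlt hK).le, (hmemT.1 hK).1, hP]
    omega
  set J : Finset ι := {j | Pi.single j 1 ∉ P}
  have hKJ : ∀ K ∈ T, K ⊆ J := fun K hK j hj => Finset.mem_filter.2
    ⟨Finset.mem_univ j, fun h => hl.single_notMem_DD (hlt hK) hj ((hmemT.1 hK).2 h)⟩
  -- a hyperplane `DD l K ⊇ P` containing `e_j ∉ P` is `P ⊔ ℂ e_j`, so `j ∈ J \ K` determines `K`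
  have hdisj : (T : Set (Finset ι)).PairwiseDisjoint (J \ ·) := by
    intro K hK K' hK' hKK'
    rw [Function.onFun, Finset.disjoint_left]
    intro j hj hj'
    obtain ⟨hjJ, hjK⟩ := Finset.mem_sdiff.1 hj
    refine hKK' (hl.DD_injOn (hlt hK) (hlt hK') ?_)
    exact Submodule.eq_of_le_of_mem_of_finrank_eq_succ (hmemT.1 hK).2 (hmemT.1 hK').2
      (single_mem_DD hjK 1) (single_mem_DD (Finset.mem_sdiff.1 hj').2 1)
      (Finset.mem_filter.1 hjJ).2 (hfinrank hK) (hfinrank hK')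
  have hJ : J.card = k + 2 := by
    have hcount := Finset.card_mul_sub_le_of_pairwiseDisjoint_sdiff
      (fun K hK => ⟨hKJ K hK, (hmemT.1 hK).1⟩) hdisj
    have hle := Finset.card_le_card (Finset.union_subset (hKJ _ h₁) (hKJ _ h₂))
    obtain ⟨d, hd⟩ : ∃ d, J.card = k + 2 + d := ⟨J.card - (k + 2), by omega⟩
    rw [hTcard, hd, show k + 2 + d - (k + 1) = d + 1 by omega] at hcount
    have hd0 : d = 0 := by nlinarith
    omega
  refine ⟨J, hJ, (Submodule.eq_of_le_of_finrank_le ?_ ?_).symm⟩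
  · rw [hl.DD_eq_inf hJ (hKJ _ h₁) (hKJ _ h₂) hK₁ hK₂ hne]
    exact le_inf hPK₁ hPK₂
  · rw [hl.finrank_DD (by omega), hP, hJ]
    omega

theorem ncard_strata (hl : GeneralPosition l) :
    {P : Submodule ℂ (ι → ℂ) |
        (∃ S : Finset (Finset ι), S.Nonempty ∧ (∀ K ∈ S, K.card = finrank ℂ V + 1) ∧
          P = ⨅ K ∈ S, DD l K) ∧
        finrank ℂ P = Fintype.card ι - 2 ∧
        {K : Finset ι | K.card = finrank ℂ V + 1 ∧ P ≤ DD l K}.ncard = finrank ℂ V + 2}.ncard =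
      (Fintype.card ι).choose (finrank ℂ V + 2) := by
  calc _ = (DD l '' {J : Finset ι | J.card = finrank ℂ V + 2}).ncard := by
        congr 1
        ext P
        refine ⟨fun ⟨_, hP, hT⟩ => hl.exists_DD_eq hP hT, ?_⟩
        rintro ⟨J, hJ : J.card = finrank ℂ V + 2, rfl⟩
        obtain ⟨a, ha, b, hb, hab⟩ := Finset.one_lt_card.1 (by omega : 1 < J.card)
        have hcard {c : ι} (hc : c ∈ J) : (J.erase c).card = finrank ℂ V + 1 := by
          rw [Finset.card_erase_of_mem hc, hJ]
          rfl
        refine ⟨⟨{J.erase a, J.erase b}, Finset.insert_nonempty _ _, ?_, ?_⟩, ?_, ?_⟩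
        · simp only [Finset.mem_insert, Finset.mem_singleton]
          rintro K (rfl | rfl)
          exacts [hcard ha, hcard hb]
        · rw [Finset.iInf_insert, Finset.iInf_singleton]
          exact hl.DD_eq_inf hJ (Finset.erase_subset a J) (Finset.erase_subset b J) (hcard ha)
            (hcard hb) fun h => hab (J.erase_injOn ha hb h)
        · rw [hl.finrank_DD (by omega), hJ]
          have := Finset.card_le_univ J
          omega
        · rw [hl.setOf_DD_le_DD, Finset.ncard_setOf_subset_card_eq, hJ,
            Nat.choose_succ_self_right]
    _ = (Fintype.card ι).choose (finrank ℂ V + 2) := by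
        have hinj : Set.InjOn (DD l) {J : Finset ι | J.card = finrank ℂ V + 2} :=
          hl.DD_injOn.mono fun J (hJ : J.card = _) => show finrank ℂ V < J.card by omega
        rw [hinj.ncard_image]
        simpa using Finset.ncard_setOf_subset_card_eq (Finset.univ : Finset ι) (finrank ℂ V + 2)

end GeneralPosition

end DD

theorem stmt7_general (k n : ℕ)
    (l : Fin n → Module.Dual ℂ (Fin k → ℂ))
    (hgen : ∀ S : Finset (Fin n), S.card = k → LinearIndependent ℂ (fun i : S => l i.1)) :
    (∀ J : Finset (Fin n), J.card = k + 2 →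
      Module.finrank ℂ ↥(DD l J) = n - 2 ∧
      {K : Finset (Fin n) | K.card = k + 1 ∧ DD l J ≤ DD l K} =
        {K : Finset (Fin n) | K ⊆ J ∧ K.card = k + 1}) ∧
    Set.ncard {P : Submodule ℂ (Fin n → ℂ) |
        (∃ S : Finset (Finset (Fin n)), S.Nonempty ∧ (∀ K ∈ S, K.card = k + 1) ∧
          P = ⨅ K ∈ S, DD l K) ∧
        Module.finrank ℂ ↥P = n - 2 ∧
        Set.ncard {K : Finset (Fin n) | K.card = k + 1 ∧ P ≤ DD l K} = k + 2} =
      Nat.choose n (k + 2) := by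
  have hdim : finrank ℂ (Fin k → ℂ) = k := Module.finrank_fin_fun ℂ
  have hl : GeneralPosition l := fun S hS => hgen S (hS.trans hdim)
  refine ⟨fun J hJ => ⟨?_, ?_⟩, ?_⟩
  · rw [hl.finrank_DD (by omega), hJ, Fintype.card_fin]
    have := card_finset_fin_le J
    omega
  · simpa only [hdim] using hl.setOf_DD_le_DD J
  · simpa only [hdim, Fintype.card_fin] using hl.ncard_strata

/-- Theorem `proofmain` (1): for every `(k+2)`-element `J ⊆ {1,…,n}` the subspace
`D_J` has codimension 2, the hyperplanes `D_K` of `B(n,k)` containing `D_J` are exactly those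
with `K ⊆ J`, `|K| = k + 1`, and consequently `B(n,k)` has exactly `C(n, k+2)` codimension-2
strata of multiplicity `k + 2`. -/
theorem stmt7 (k n : ℕ) (hk : 0 < k) (hkn : k + 2 ≤ n)
    (l : Fin n → Module.Dual ℂ (Fin k → ℂ))
    (hgen : ∀ S : Finset (Fin n), S.card = k → LinearIndependent ℂ (fun i : S => l i.1)) :
    (∀ J : Finset (Fin n), J.card = k + 2 →
      Module.finrank ℂ ↥(DD l J) = n - 2 ∧
      {K : Finset (Fin n) | K.card = k + 1 ∧ DD l J ≤ DD l K} =
        {K : Finset (Fin n) | K ⊆ J ∧ K.card = k + 1}) ∧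
    Set.ncard {P : Submodule ℂ (Fin n → ℂ) |
        (∃ S : Finset (Finset (Fin n)), S.Nonempty ∧ (∀ K ∈ S, K.card = k + 1) ∧
          P = ⨅ K ∈ S, DD l K) ∧
        Module.finrank ℂ ↥P = n - 2 ∧
        Set.ncard {K : Finset (Fin n) | K.card = k + 1 ∧ P ≤ DD l K} = k + 2} =
      Nat.choose n (k + 2) :=
  stmt7_general k n l hgen
end

section
/- Let K_1, K_2, K_3 be pairwise distinct (k+1)-element subsets of {1, …, n} with |K_1 ∪ K_2 ∪ K_3| ≥ k + 3. Then D_{K_1} ∩ D_{K_2} ∩ D_{K_3} has codimension 2 in ℂ^n if and only if both of the following hold: (i) K_i ⊆ K_j ∪ K_m for every permutation (i, j, m) of (1, 2, 3); and (ii) setting T = K_1 ∩ K_2 ∩ K_3, E = ⋂_{r∈T} ker l_r, and W_{ij} = ⋂_{r ∈ K_i ∩ K_j} ker l_r for i ≠ j, the subspace W_{12} + W_{13} + W_{23} is a proper subspace of E. If (i) or (ii) fails, the codimension of D_{K_1} ∩ D_{K_2} ∩ D_{K_3} equals 3. -/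
/-!
Write `W_{ij} = ⋂_{r ∈ K_i ∩ K_j} ker l_r`. A point `x` of `D_{K₁} ∩ D_{K₂} ∩ D_{K₃}` is determined
by its coordinates off `K₁ ∪ K₂ ∪ K₃` together with the (unique) witnesses
`y_j ∈ ⋂_{i ∈ K_j} H_i^x`, and these are subject only to `y_i - y_j ∈ W_{ij}`. Counting dimensions,
`dim (D_{K₁} ∩ D_{K₂} ∩ D_{K₃}) + |K₁ ∪ K₂ ∪ K₃| + dim (W₁₂ + W₁₃ + W₂₃) = n + k + Σ dim W_{ij}`.
Genericity gives `dim W_{ij} = k - |K_i ∩ K_j|` and `dim E = k - |T|`, so by inclusion–exclusion the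
codimension is `3 - dim (E / (W₁₂ + W₁₃ + W₂₃))`. This quotient has dimension at most one, and it
vanishes as soon as some `K_i ⊄ K_j ∪ K_m`: then `|(K_i ∩ K_j) ∪ (K_i ∩ K_m)| ≤ k`, and for at most
`k` generic functionals `W_{ij} + W_{im}` is the joint kernel of the common ones, which is `E`.
-/

open Module Submodule

theorem Finset.card_inter_le_of_ne {α : Type*} [DecidableEq α] {A B : Finset α} {m : ℕ}
    (hA : A.card = m + 1) (hB : B.card = m + 1) (hne : A ≠ B) : (A ∩ B).card ≤ m := by
  by_contra! h
  have hAB : A ∩ B = A := Finset.eq_of_subset_of_card_le Finset.inter_subset_left (by omega)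
  have hBA : A ∩ B = B := Finset.eq_of_subset_of_card_le Finset.inter_subset_right (by omega)
  exact hne (hAB.symm.trans hBA)

theorem Finset.card_union_union_add_card_inter_inter {α : Type*} [DecidableEq α]
    (A B C : Finset α) :
    (A ∪ B ∪ C).card + (A ∩ B).card + (A ∩ C).card + (B ∩ C).card =
      A.card + B.card + C.card + (A ∩ B ∩ C).card := by
  have h₁ := Finset.card_union_add_card_inter (A ∪ B) C
  have h₂ := Finset.card_union_add_card_inter A B
  have h₃ := Finset.card_union_add_card_inter (A ∩ C) (B ∩ C)
  rw [Finset.union_inter_distrib_right] at h₁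
  rw [show A ∩ C ∩ (B ∩ C) = A ∩ B ∩ C by ext; simp only [Finset.mem_inter]; tauto] at h₃
  omega

section LinearAlgebra

variable {K M N : Type*} [Field K] [AddCommGroup M] [Module K M] [AddCommGroup N] [Module K N]
  [FiniteDimensional K M]

theorem Submodule.finrank_map_add_finrank_inf_ker (f : M →ₗ[K] N) (p : Submodule K M) :
    finrank K (p.map f) + finrank K ↥(p ⊓ LinearMap.ker f) = finrank K p := by
  rw [← (comapSubtypeEquivOfLe (inf_le_left : p ⊓ LinearMap.ker f ≤ p)).finrank_eq, comap_inf,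
    comap_subtype_self, top_inf_eq, ← LinearMap.ker_domRestrict, ← LinearMap.range_domRestrict]
  exact LinearMap.finrank_range_add_finrank_ker _

theorem Submodule.finrank_inf_comap_add_finrank_map_sup [FiniteDimensional K N] (f : M →ₗ[K] N)
    (p : Submodule K M) (q : Submodule K N) :
    finrank K ↥(p ⊓ q.comap f) + finrank K ↥(p.map f ⊔ q) = finrank K p + finrank K q := by
  have h₁ := finrank_map_add_finrank_inf_ker f (p ⊓ q.comap f)
  have h₂ := finrank_map_add_finrank_inf_ker f p
  have h₃ := finrank_sup_add_finrank_inf_eq (p.map f) q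
  rw [← map_inf_eq_map_inf_comap, inf_assoc, inf_eq_right.2 (LinearMap.ker_le_comap f)] at h₁
  omega

end LinearAlgebra

section Functionals

variable {K ι V : Type*} [Field K] [AddCommGroup V] [Module K V]

theorem sub_mem_biInf_ker_iff (l : ι → Dual K V) (S : Finset ι) (y z : V) :
    y - z ∈ ⨅ i ∈ S, LinearMap.ker (l i) ↔ ∀ i ∈ S, l i y = l i z := by
  simp [sub_eq_zero]

theorem sup_biInf_ker_inter_le [DecidableEq ι] (l : ι → Dual K V) (K₁ K₂ K₃ : Finset ι) :
    (⨅ i ∈ K₁ ∩ K₂, LinearMap.ker (l i)) ⊔ (⨅ i ∈ K₁ ∩ K₃, LinearMap.ker (l i)) ⊔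
        ⨅ i ∈ K₂ ∩ K₃, LinearMap.ker (l i) ≤ ⨅ i ∈ K₁ ∩ K₂ ∩ K₃, LinearMap.ker (l i) := by
  refine sup_le (sup_le ?_ ?_) ?_ <;>
    exact biInf_mono fun i hi => by simp only [Finset.mem_inter] at hi ⊢; tauto

theorem finrank_biInf_ker_add_card [FiniteDimensional K V] (l : ι → Dual K V) (S : Finset ι)
    (hS : LinearIndependent K (fun i : S => l i)) :
    finrank K ↥(⨅ i ∈ S, LinearMap.ker (l i)) + S.card = finrank K V := by
  have h : ⨅ i ∈ S, LinearMap.ker (l i) =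
      (span K (Set.range fun i : S => l i)).dualCoannihilator := by
    refine SetLike.coe_injective ?_
    rw [coe_dualCoannihilator_span]
    ext x
    simp
  rw [h, ← Fintype.card_coe S, ← finrank_span_eq_card hS, add_comm,
    Subspace.finrank_add_finrank_dualCoannihilator_eq]

theorem linearIndependent_proj [Finite ι] [DecidableEq ι] :
    LinearIndependent K (fun i : ι => (LinearMap.proj i : (ι → K) →ₗ[K] K)) := by
  have := Fintype.ofFinite ι
  have h : (fun i : ι => (LinearMap.proj i : (ι → K) →ₗ[K] K)) = (Pi.basisFun K ι).dualBasis := by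
    ext
    simp
  exact h ▸ (Pi.basisFun K ι).dualBasis.linearIndependent

end Functionals

section CompatibleTriples

variable {K V : Type*} [Field K] [AddCommGroup V] [Module K V]

local notation "π₁" => LinearMap.fst K V (V × V)
local notation "π₂" => LinearMap.fst K V V ∘ₗ LinearMap.snd K V (V × V)
local notation "π₃" => LinearMap.snd K V V ∘ₗ LinearMap.snd K V (V × V)

def compatibleTriples (W₁₂ W₁₃ W₂₃ : Submodule K V) : Submodule K (V × V × V) :=
  W₁₂.comap (π₁ - π₂) ⊓ W₁₃.comap (π₁ - π₃) ⊓ W₂₃.comap (π₂ - π₃)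

theorem mem_compatibleTriples {W₁₂ W₁₃ W₂₃ : Submodule K V} {y : V × V × V} :
    y ∈ compatibleTriples W₁₂ W₁₃ W₂₃ ↔
      y.1 - y.2.1 ∈ W₁₂ ∧ y.1 - y.2.2 ∈ W₁₃ ∧ y.2.1 - y.2.2 ∈ W₂₃ := by
  simp [compatibleTriples, and_assoc]

theorem finrank_compatibleTriples_add [FiniteDimensional K V] (W₁₂ W₁₃ W₂₃ : Submodule K V) :
    finrank K ↥(compatibleTriples W₁₂ W₁₃ W₂₃) + finrank K ↥(W₁₂ ⊔ W₁₃ ⊔ W₂₃) =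
      finrank K V + finrank K W₁₂ + finrank K W₁₃ + finrank K W₂₃ := by
  have h₁ := finrank_inf_comap_add_finrank_map_sup (π₁ - π₂) ⊤ W₁₂
  have h₂ := finrank_inf_comap_add_finrank_map_sup (π₁ - π₃) (W₁₂.comap (π₁ - π₂)) W₁₃
  have h₃ := finrank_inf_comap_add_finrank_map_sup (π₂ - π₃)
    (W₁₂.comap (π₁ - π₂) ⊓ W₁₃.comap (π₁ - π₃)) W₂₃
  have hmap₁ : (⊤ : Submodule K (V × V × V)).map (π₁ - π₂) = ⊤ :=
    eq_top_iff.2 fun v _ => ⟨(v, 0, 0), trivial, by simp⟩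
  have hmap₂ : (W₁₂.comap (π₁ - π₂)).map (π₁ - π₃) = ⊤ :=
    eq_top_iff.2 fun v _ => ⟨(v, v, 0), by simp, by simp⟩
  have hmap₃ : (W₁₂.comap (π₁ - π₂) ⊓ W₁₃.comap (π₁ - π₃)).map (π₂ - π₃) = W₁₂ ⊔ W₁₃ := by
    apply le_antisymm
    · rintro _ ⟨y, ⟨h₁₂, h₁₃⟩, rfl⟩
      have hy : y.2.1 - y.2.2 = (y.1 - y.2.2) - (y.1 - y.2.1) := by abel
      simp only [LinearMap.sub_apply, LinearMap.coe_comp, Function.comp_apply,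
        LinearMap.fst_apply, LinearMap.snd_apply, hy]
      exact sub_mem (mem_sup_right h₁₃) (mem_sup_left h₁₂)
    · exact sup_le (fun w hw => ⟨(0, w, 0), by simp [hw], by simp⟩)
        (fun w hw => ⟨(0, 0, -w), by simp [hw], by simp⟩)
  rw [top_inf_eq, hmap₁, top_sup_eq, finrank_top, finrank_top, finrank_prod, finrank_prod] at h₁
  rw [hmap₂, top_sup_eq, finrank_top] at h₂
  rw [hmap₃] at h₃
  unfold compatibleTriples
  omega

end CompatibleTriples

section Generic

variable {K ι V : Type*} [Field K] [AddCommGroup V] [Module K V]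

def IsGeneric (l : ι → Dual K V) : Prop :=
  ∀ S : Finset ι, S.card = finrank K V → LinearIndependent K (fun i : S => l i)

namespace IsGeneric

variable {l : ι → Dual K V} (hl : IsGeneric l)
include hl

theorem linearIndependent [Fintype ι] (hι : finrank K V ≤ Fintype.card ι) {S : Finset ι}
    (hS : S.card ≤ finrank K V) : LinearIndependent K (fun i : S => l i) := by
  obtain ⟨T, hST, -, hT⟩ := Finset.exists_subsuperset_card_eq S.subset_univ hS (by simpa)
  exact (hl T hT).comp (fun i : S => (⟨i, hST i.2⟩ : T))
    fun _ _ h => Subtype.ext (congrArg Subtype.val h :)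

theorem finrank_biInf_ker [FiniteDimensional K V] [Fintype ι]
    (hι : finrank K V ≤ Fintype.card ι) {S : Finset ι} (hS : S.card ≤ finrank K V) :
    finrank K ↥(⨅ i ∈ S, LinearMap.ker (l i)) + S.card = finrank K V :=
  finrank_biInf_ker_add_card l S (hl.linearIndependent hι hS)

theorem biInf_ker_eq_bot [FiniteDimensional K V] {S : Finset ι} (hS : finrank K V ≤ S.card) :
    ⨅ i ∈ S, LinearMap.ker (l i) = ⊥ := by
  obtain ⟨T, hTS, hT⟩ := Finset.exists_subset_card_eq hS
  have h := finrank_biInf_ker_add_card l T (hl T hT)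
  have hbot : finrank K ↥(⨅ i ∈ T, LinearMap.ker (l i)) = 0 := by omega
  exact le_bot_iff.1 (finrank_eq_zero.1 hbot ▸ biInf_mono hTS)

variable [DecidableEq ι]

theorem biInf_ker_sup [FiniteDimensional K V] [Fintype ι] (hι : finrank K V ≤ Fintype.card ι)
    {A B : Finset ι} (hAB : (A ∪ B).card ≤ finrank K V) :
    (⨅ i ∈ A, LinearMap.ker (l i)) ⊔ (⨅ i ∈ B, LinearMap.ker (l i)) =
      ⨅ i ∈ A ∩ B, LinearMap.ker (l i) := by
  have hA := hl.finrank_biInf_ker hι ((Finset.card_le_card Finset.subset_union_left).trans hAB)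
  have hB := hl.finrank_biInf_ker hι ((Finset.card_le_card Finset.subset_union_right).trans hAB)
  have hAB' := hl.finrank_biInf_ker hι hAB
  have hI := hl.finrank_biInf_ker hι
    ((Finset.card_le_card (Finset.inter_subset_union)).trans hAB)
  have hsup := finrank_sup_add_finrank_inf_eq (⨅ i ∈ A, LinearMap.ker (l i))
    (⨅ i ∈ B, LinearMap.ker (l i))
  have hcard := Finset.card_union_add_card_inter A B
  rw [← Finset.iInf_union] at hsup
  refine eq_of_le_of_finrank_le (sup_le (biInf_mono fun _ => Finset.mem_of_mem_inter_left)
    (biInf_mono fun _ => Finset.mem_of_mem_inter_right)) ?_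
  omega

theorem finrank_biInf_ker_inter_le [FiniteDimensional K V] [Fintype ι]
    (hι : finrank K V ≤ Fintype.card ι) {A B : Finset ι} (hA : A.card ≤ finrank K V)
    (hB : B.card ≤ finrank K V)
    (hAB : (A ∪ B).card ≤ finrank K V + 1) :
    finrank K ↥(⨅ i ∈ A ∩ B, LinearMap.ker (l i)) ≤
      finrank K ↥((⨅ i ∈ A, LinearMap.ker (l i)) ⊔ (⨅ i ∈ B, LinearMap.ker (l i))) + 1 := by
  rcases Nat.lt_or_ge (A ∪ B).card (finrank K V + 1) with hlt | hge
  · rw [hl.biInf_ker_sup (A := A) (B := B) hι (by omega)]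
    omega
  have hsup := finrank_sup_add_finrank_inf_eq (⨅ i ∈ A, LinearMap.ker (l i))
    (⨅ i ∈ B, LinearMap.ker (l i))
  rw [← Finset.iInf_union, hl.biInf_ker_eq_bot (S := A ∪ B) (by omega), finrank_bot] at hsup
  have := hl.finrank_biInf_ker hι hA
  have := hl.finrank_biInf_ker hι hB
  have := hl.finrank_biInf_ker (S := A ∩ B) hι
    ((Finset.card_le_card Finset.inter_subset_left).trans hA)
  have := Finset.card_union_add_card_inter A B
  omega

theorem biInf_ker_inter_inter_le_sup [FiniteDimensional K V] [Fintype ι] {A B C : Finset ι}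
    (hA : A.card = finrank K V + 1) (h : ¬A ⊆ B ∪ C) :
    ⨅ i ∈ A ∩ B ∩ C, LinearMap.ker (l i) ≤
      (⨅ i ∈ A ∩ B, LinearMap.ker (l i)) ⊔ ⨅ i ∈ A ∩ C, LinearMap.ker (l i) := by
  have hι : finrank K V ≤ Fintype.card ι := by have := A.card_le_univ; omega
  have hlt : (A ∩ (B ∪ C)).card < A.card := Finset.card_lt_card
    (Finset.inter_subset_left.ssubset_of_not_subset
      fun h' => h fun _ hx => (Finset.mem_inter.1 (h' hx)).2)
  rw [hl.biInf_ker_sup hι (by rw [← Finset.inter_union_distrib_left]; omega),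
    show A ∩ B ∩ (A ∩ C) = A ∩ B ∩ C by ext; simp only [Finset.mem_inter]; tauto]

variable {K₁ K₂ K₃ : Finset ι}

theorem finrank_biInf_ker_inter₃_le [FiniteDimensional K V] [Fintype ι]
    (hc₁ : K₁.card = finrank K V + 1) (h₁₂ : (K₁ ∩ K₂).card ≤ finrank K V)
    (h₁₃ : (K₁ ∩ K₃).card ≤ finrank K V) :
    finrank K ↥(⨅ i ∈ K₁ ∩ K₂ ∩ K₃, LinearMap.ker (l i)) ≤
      finrank K ↥((⨅ i ∈ K₁ ∩ K₂, LinearMap.ker (l i)) ⊔ (⨅ i ∈ K₁ ∩ K₃, LinearMap.ker (l i)) ⊔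
        ⨅ i ∈ K₂ ∩ K₃, LinearMap.ker (l i)) + 1 := by
  have hι : finrank K V ≤ Fintype.card ι := by have := K₁.card_le_univ; omega
  have h := hl.finrank_biInf_ker_inter_le hι h₁₂ h₁₃ (hc₁ ▸ Finset.card_le_card
    (Finset.union_subset Finset.inter_subset_left Finset.inter_subset_left))
  rw [show K₁ ∩ K₂ ∩ (K₁ ∩ K₃) = K₁ ∩ K₂ ∩ K₃ by ext; simp only [Finset.mem_inter]; tauto] at h
  exact h.trans (Nat.add_le_add_right (finrank_mono le_sup_left) 1)

theorem biInf_ker_inter₃_le_sup [FiniteDimensional K V] [Fintype ι]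
    (hc₁ : K₁.card = finrank K V + 1) (hc₂ : K₂.card = finrank K V + 1)
    (hc₃ : K₃.card = finrank K V + 1)
    (h : ¬(K₁ ⊆ K₂ ∪ K₃ ∧ K₂ ⊆ K₁ ∪ K₃ ∧ K₃ ⊆ K₁ ∪ K₂)) :
    ⨅ i ∈ K₁ ∩ K₂ ∩ K₃, LinearMap.ker (l i) ≤
      (⨅ i ∈ K₁ ∩ K₂, LinearMap.ker (l i)) ⊔ (⨅ i ∈ K₁ ∩ K₃, LinearMap.ker (l i)) ⊔
        ⨅ i ∈ K₂ ∩ K₃, LinearMap.ker (l i) := by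
  simp only [not_and_or] at h
  rcases h with h | h | h
  · exact (hl.biInf_ker_inter_inter_le_sup hc₁ h).trans le_sup_left
  · have h₂ := hl.biInf_ker_inter_inter_le_sup hc₂ h
    rw [Finset.inter_comm K₂ K₁] at h₂
    exact h₂.trans (sup_le (le_sup_left.trans le_sup_left) le_sup_right)
  · have h₃ := hl.biInf_ker_inter_inter_le_sup hc₃ h
    rw [Finset.inter_comm K₃ K₁, Finset.inter_comm K₃ K₂,
      show K₁ ∩ K₃ ∩ K₂ = K₁ ∩ K₂ ∩ K₃ by ext; simp only [Finset.mem_inter]; tauto] at h₃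
    exact h₃.trans (sup_le (le_sup_right.trans le_sup_left) le_sup_right)

end IsGeneric

end Generic

section Discriminantal

variable {ι V : Type*} [AddCommGroup V] [Module ℂ V] (l : ι → Dual ℂ V) (K₁ K₂ K₃ : Finset ι)

def DD.witnesses : Submodule ℂ ((V × V × V) × (ι → ℂ)) where
  carrier := {p | (∀ i ∈ K₁, p.2 i = l i p.1.1) ∧ (∀ i ∈ K₂, p.2 i = l i p.1.2.1) ∧
    ∀ i ∈ K₃, p.2 i = l i p.1.2.2}
  add_mem' := by
    rintro p q ⟨hp₁, hp₂, hp₃⟩ ⟨hq₁, hq₂, hq₃⟩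
    exact ⟨fun i hi => by simp [hp₁ i hi, hq₁ i hi], fun i hi => by simp [hp₂ i hi, hq₂ i hi],
      fun i hi => by simp [hp₃ i hi, hq₃ i hi]⟩
  zero_mem' := by simp
  smul_mem' := by
    rintro c p ⟨hp₁, hp₂, hp₃⟩
    exact ⟨fun i hi => by simp [hp₁ i hi], fun i hi => by simp [hp₂ i hi],
      fun i hi => by simp [hp₃ i hi]⟩

theorem DD.map_snd_witnesses :
    (DD.witnesses l K₁ K₂ K₃).map (LinearMap.snd ℂ (V × V × V) (ι → ℂ)) =
      DD l K₁ ⊓ DD l K₂ ⊓ DD l K₃ := by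
  ext x
  constructor
  · rintro ⟨⟨y, x⟩, ⟨h₁, h₂, h₃⟩, rfl⟩
    exact ⟨⟨⟨y.1, h₁⟩, ⟨y.2.1, h₂⟩⟩, ⟨y.2.2, h₃⟩⟩
  · rintro ⟨⟨⟨y₁, h₁⟩, ⟨y₂, h₂⟩⟩, ⟨y₃, h₃⟩⟩
    exact ⟨((y₁, y₂, y₃), x), ⟨h₁, h₂, h₃⟩, rfl⟩

variable {l K₁ K₂ K₃} in
theorem DD.witnesses_inf_ker_snd (h₁ : ⨅ i ∈ K₁, LinearMap.ker (l i) = ⊥)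
    (h₂ : ⨅ i ∈ K₂, LinearMap.ker (l i) = ⊥) (h₃ : ⨅ i ∈ K₃, LinearMap.ker (l i) = ⊥) :
    DD.witnesses l K₁ K₂ K₃ ⊓ LinearMap.ker (LinearMap.snd ℂ (V × V × V) (ι → ℂ)) = ⊥ := by
  refine eq_bot_iff.2 ?_
  rintro ⟨⟨y₁, y₂, y₃⟩, x⟩ ⟨⟨g₁, g₂, g₃⟩, hx : x = 0⟩
  subst hx
  have hy : ∀ (S : Finset ι) (y : V), (∀ i ∈ S, (0 : ι → ℂ) i = l i y) →
      y ∈ ⨅ i ∈ S, LinearMap.ker (l i) := fun S y h => by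
    simpa using fun i hi => (h i hi).symm
  have e₁ := h₁ ▸ hy K₁ y₁ g₁
  have e₂ := h₂ ▸ hy K₂ y₂ g₂
  have e₃ := h₃ ▸ hy K₃ y₃ g₃
  rw [mem_bot] at e₁ e₂ e₃
  simp [e₁, e₂, e₃]

theorem DD.map_fst_witnesses [DecidableEq ι] :
    (DD.witnesses l K₁ K₂ K₃).map (LinearMap.fst ℂ (V × V × V) (ι → ℂ)) =
      compatibleTriples (⨅ i ∈ K₁ ∩ K₂, LinearMap.ker (l i))
        (⨅ i ∈ K₁ ∩ K₃, LinearMap.ker (l i)) (⨅ i ∈ K₂ ∩ K₃, LinearMap.ker (l i)) := by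
  ext y
  simp only [mem_map, LinearMap.fst_apply, mem_compatibleTriples, sub_mem_biInf_ker_iff]
  constructor
  · rintro ⟨⟨y, x⟩, ⟨h₁, h₂, h₃⟩, rfl⟩
    refine ⟨fun i hi => ?_, fun i hi => ?_, fun i hi => ?_⟩ <;>
      rw [Finset.mem_inter] at hi
    exacts [(h₁ i hi.1).symm.trans (h₂ i hi.2), (h₁ i hi.1).symm.trans (h₃ i hi.2),
      (h₂ i hi.1).symm.trans (h₃ i hi.2)]
  · rintro ⟨h₁₂, h₁₃, h₂₃⟩
    refine ⟨(y, fun i => if i ∈ K₁ then l i y.1 else if i ∈ K₂ then l i y.2.1 else l i y.2.2),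
      ⟨fun i hi => ?_, fun i hi => ?_, fun i hi => ?_⟩, rfl⟩
    · simp [hi]
    · by_cases hi₁ : i ∈ K₁
      · simp [hi₁, h₁₂ i (Finset.mem_inter.2 ⟨hi₁, hi⟩)]
      · simp [hi₁, hi]
    · by_cases hi₁ : i ∈ K₁
      · simp [hi₁, h₁₃ i (Finset.mem_inter.2 ⟨hi₁, hi⟩)]
      by_cases hi₂ : i ∈ K₂
      · simp [hi₁, hi₂, h₂₃ i (Finset.mem_inter.2 ⟨hi₂, hi⟩)]
      · simp [hi₁, hi₂]

theorem DD.witnesses_inf_ker_fst [DecidableEq ι] :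
    DD.witnesses l K₁ K₂ K₃ ⊓ LinearMap.ker (LinearMap.fst ℂ (V × V × V) (ι → ℂ)) =
      (⨅ i ∈ K₁ ∪ K₂ ∪ K₃, LinearMap.ker (LinearMap.proj i)).map
        (LinearMap.inr ℂ (V × V × V) (ι → ℂ)) := by
  rw [map_inr]
  ext ⟨y, x⟩
  simp only [mem_inf, LinearMap.mem_ker, LinearMap.fst_apply, mem_prod, mem_bot]
  constructor
  · rintro ⟨⟨h₁, h₂, h₃⟩, rfl⟩
    refine ⟨rfl, ?_⟩
    simp_all [or_imp]
  · rintro ⟨rfl, hx⟩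
    simp only [mem_iInf, LinearMap.mem_ker, LinearMap.proj_apply, Finset.mem_union] at hx
    exact ⟨⟨fun i hi => by simpa using hx i (.inl (.inl hi)),
      fun i hi => by simpa using hx i (.inl (.inr hi)), fun i hi => by simpa using hx i (.inr hi)⟩,
      rfl⟩

theorem finrank_DD_inf_DD_inf_DD_add_card [Fintype ι] [DecidableEq ι] [FiniteDimensional ℂ V]
    {K₁ K₂ K₃ : Finset ι} (h₁ : ⨅ i ∈ K₁, LinearMap.ker (l i) = ⊥)
    (h₂ : ⨅ i ∈ K₂, LinearMap.ker (l i) = ⊥) (h₃ : ⨅ i ∈ K₃, LinearMap.ker (l i) = ⊥) :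
    finrank ℂ ↥(DD l K₁ ⊓ DD l K₂ ⊓ DD l K₃) + (K₁ ∪ K₂ ∪ K₃).card =
      finrank ℂ ↥(compatibleTriples (⨅ i ∈ K₁ ∩ K₂, LinearMap.ker (l i))
        (⨅ i ∈ K₁ ∩ K₃, LinearMap.ker (l i)) (⨅ i ∈ K₂ ∩ K₃, LinearMap.ker (l i))) +
        Fintype.card ι := by
  have hsnd := finrank_map_add_finrank_inf_ker (LinearMap.snd ℂ (V × V × V) (ι → ℂ))
    (DD.witnesses l K₁ K₂ K₃)
  have hfst := finrank_map_add_finrank_inf_ker (LinearMap.fst ℂ (V × V × V) (ι → ℂ))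
    (DD.witnesses l K₁ K₂ K₃)
  have hQ := finrank_biInf_ker_add_card (fun i : ι => (LinearMap.proj i : (ι → ℂ) →ₗ[ℂ] ℂ))
    (K₁ ∪ K₂ ∪ K₃) (linearIndependent_proj.comp _ Subtype.val_injective)
  rw [DD.map_snd_witnesses, DD.witnesses_inf_ker_snd h₁ h₂ h₃, finrank_bot] at hsnd
  rw [DD.map_fst_witnesses, DD.witnesses_inf_ker_fst,
    (equivMapOfInjective _ LinearMap.inr_injective _).finrank_eq.symm] at hfst
  rw [finrank_fintype_fun_eq_card] at hQ
  omega

variable {l} in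
theorem IsGeneric.finrank_DD_inf_DD_inf_DD_add [Fintype ι] [DecidableEq ι] [FiniteDimensional ℂ V]
    (hl : IsGeneric l) {K₁ K₂ K₃ : Finset ι} (hc₁ : K₁.card = finrank ℂ V + 1)
    (hc₂ : K₂.card = finrank ℂ V + 1) (hc₃ : K₃.card = finrank ℂ V + 1)
    (h₁₂ : (K₁ ∩ K₂).card ≤ finrank ℂ V) (h₁₃ : (K₁ ∩ K₃).card ≤ finrank ℂ V)
    (h₂₃ : (K₂ ∩ K₃).card ≤ finrank ℂ V) :
    finrank ℂ ↥(DD l K₁ ⊓ DD l K₂ ⊓ DD l K₃) + 3 +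
        finrank ℂ ↥((⨅ i ∈ K₁ ∩ K₂, LinearMap.ker (l i)) ⊔ (⨅ i ∈ K₁ ∩ K₃, LinearMap.ker (l i)) ⊔
          ⨅ i ∈ K₂ ∩ K₃, LinearMap.ker (l i)) =
      Fintype.card ι + finrank ℂ ↥(⨅ i ∈ K₁ ∩ K₂ ∩ K₃, LinearMap.ker (l i)) := by
  have hι : finrank ℂ V ≤ Fintype.card ι := by have := K₁.card_le_univ; omega
  have hD := finrank_DD_inf_DD_inf_DD_add_card l (hl.biInf_ker_eq_bot (S := K₁) (by omega))
    (hl.biInf_ker_eq_bot (S := K₂) (by omega)) (hl.biInf_ker_eq_bot (S := K₃) (by omega))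
  have hZ := finrank_compatibleTriples_add (⨅ i ∈ K₁ ∩ K₂, LinearMap.ker (l i))
    (⨅ i ∈ K₁ ∩ K₃, LinearMap.ker (l i)) (⨅ i ∈ K₂ ∩ K₃, LinearMap.ker (l i))
  have hW₁₂ := hl.finrank_biInf_ker hι h₁₂
  have hW₁₃ := hl.finrank_biInf_ker hι h₁₃
  have hW₂₃ := hl.finrank_biInf_ker hι h₂₃
  have hE := hl.finrank_biInf_ker (S := K₁ ∩ K₂ ∩ K₃) hι
    ((Finset.card_le_card Finset.inter_subset_left).trans h₁₂)
  have hcard := Finset.card_union_union_add_card_inter_inter K₁ K₂ K₃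
  omega

end Discriminantal

theorem stmt8_general (k n : ℕ)
    (l : Fin n → Module.Dual ℂ (Fin k → ℂ))
    (hgen : ∀ S : Finset (Fin n), S.card = k → LinearIndependent ℂ (fun i : S => l i.1))
    (K₁ K₂ K₃ : Finset (Fin n))
    (hne₁₂ : K₁ ≠ K₂) (hne₁₃ : K₁ ≠ K₃) (hne₂₃ : K₂ ≠ K₃)
    (hc₁ : K₁.card = k + 1) (hc₂ : K₂.card = k + 1) (hc₃ : K₃.card = k + 1)
    (E : Submodule ℂ (Fin k → ℂ)) (hE : E = ⨅ r ∈ K₁ ∩ K₂ ∩ K₃, LinearMap.ker (l r))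
    (W₁₂ W₁₃ W₂₃ : Submodule ℂ (Fin k → ℂ))
    (hW₁₂ : W₁₂ = ⨅ r ∈ K₁ ∩ K₂, LinearMap.ker (l r))
    (hW₁₃ : W₁₃ = ⨅ r ∈ K₁ ∩ K₃, LinearMap.ker (l r))
    (hW₂₃ : W₂₃ = ⨅ r ∈ K₂ ∩ K₃, LinearMap.ker (l r)) :
    (Module.finrank ℂ ↥(DD l K₁ ⊓ DD l K₂ ⊓ DD l K₃) = n - 2 ↔
      (K₁ ⊆ K₂ ∪ K₃ ∧ K₂ ⊆ K₁ ∪ K₃ ∧ K₃ ⊆ K₁ ∪ K₂) ∧ W₁₂ ⊔ W₁₃ ⊔ W₂₃ < E) ∧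
    (¬((K₁ ⊆ K₂ ∪ K₃ ∧ K₂ ⊆ K₁ ∪ K₃ ∧ K₃ ⊆ K₁ ∪ K₂) ∧ W₁₂ ⊔ W₁₃ ⊔ W₂₃ < E) →
      Module.finrank ℂ ↥(DD l K₁ ⊓ DD l K₂ ⊓ DD l K₃) = n - 3) := by
  have hV : finrank ℂ (Fin k → ℂ) = k := finrank_fin_fun ℂ
  have hl : IsGeneric l := fun S hS => hgen S (hS.trans hV)
  rw [← hV] at hc₁ hc₂ hc₃
  have h₁₂ := Finset.card_inter_le_of_ne hc₁ hc₂ hne₁₂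
  have h₁₃ := Finset.card_inter_le_of_ne hc₁ hc₃ hne₁₃
  have h₂₃ := Finset.card_inter_le_of_ne hc₂ hc₃ hne₂₃
  have hdim := hl.finrank_DD_inf_DD_inf_DD_add hc₁ hc₂ hc₃ h₁₂ h₁₃ h₂₃
  have hle := hl.finrank_biInf_ker_inter₃_le hc₁ h₁₂ h₁₃
  have hcover := hl.biInf_ker_inter₃_le_sup hc₁ hc₂ hc₃
  have hSE := sup_biInf_ker_inter_le l K₁ K₂ K₃
  rw [← hE, ← hW₁₂, ← hW₁₃, ← hW₂₃] at hdim hle hcover hSE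
  rw [Fintype.card_fin] at hdim
  by_cases hcond : (K₁ ⊆ K₂ ∪ K₃ ∧ K₂ ⊆ K₁ ∪ K₃ ∧ K₃ ⊆ K₁ ∪ K₂) ∧ W₁₂ ⊔ W₁₃ ⊔ W₂₃ < E
  · have := finrank_lt_finrank_of_lt hcond.2
    exact ⟨iff_of_true (by omega) hcond, fun h => absurd hcond h⟩
  · have hSE' : W₁₂ ⊔ W₁₃ ⊔ W₂₃ = E := by
      by_cases hi : K₁ ⊆ K₂ ∪ K₃ ∧ K₂ ⊆ K₁ ∪ K₃ ∧ K₃ ⊆ K₁ ∪ K₂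
      · exact hSE.eq_of_not_lt fun h => hcond ⟨hi, h⟩
      · exact le_antisymm hSE (hcover hi)
    rw [hSE'] at hdim
    exact ⟨iff_of_false (by omega) hcond, fun _ => by omega⟩

/-- Theorem `proofmain` (2): a triple of distinct hyperplanes `D_{K₁}, D_{K₂},
D_{K₃}` of `B(n,k)` with `|K₁ ∪ K₂ ∪ K₃| ≥ k + 3` intersects in codimension 2 iff
(i) each `Kᵢ` is contained in the union of the other two, and (ii) with `T = K₁ ∩ K₂ ∩ K₃`,
`E = ⋂_{r ∈ T} ker l_r` and `W_{ij} = ⋂_{r ∈ Kᵢ ∩ Kⱼ} ker l_r`, the subspace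
`W₁₂ + W₁₃ + W₂₃` is a proper subspace of `E`; if (i) or (ii) fails the codimension is 3. -/
theorem stmt8 (k n : ℕ) (hk : 0 < k) (hkn : k < n)
    (l : Fin n → Module.Dual ℂ (Fin k → ℂ))
    (hgen : ∀ S : Finset (Fin n), S.card = k → LinearIndependent ℂ (fun i : S => l i.1))
    (K₁ K₂ K₃ : Finset (Fin n))
    (hne₁₂ : K₁ ≠ K₂) (hne₁₃ : K₁ ≠ K₃) (hne₂₃ : K₂ ≠ K₃)
    (hc₁ : K₁.card = k + 1) (hc₂ : K₂.card = k + 1) (hc₃ : K₃.card = k + 1)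
    (hbig : k + 3 ≤ (K₁ ∪ K₂ ∪ K₃).card)
    (E : Submodule ℂ (Fin k → ℂ)) (hE : E = ⨅ r ∈ K₁ ∩ K₂ ∩ K₃, LinearMap.ker (l r))
    (W₁₂ W₁₃ W₂₃ : Submodule ℂ (Fin k → ℂ))
    (hW₁₂ : W₁₂ = ⨅ r ∈ K₁ ∩ K₂, LinearMap.ker (l r))
    (hW₁₃ : W₁₃ = ⨅ r ∈ K₁ ∩ K₃, LinearMap.ker (l r))
    (hW₂₃ : W₂₃ = ⨅ r ∈ K₂ ∩ K₃, LinearMap.ker (l r)) :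
    (Module.finrank ℂ ↥(DD l K₁ ⊓ DD l K₂ ⊓ DD l K₃) = n - 2 ↔
      (K₁ ⊆ K₂ ∪ K₃ ∧ K₂ ⊆ K₁ ∪ K₃ ∧ K₃ ⊆ K₁ ∪ K₂) ∧ W₁₂ ⊔ W₁₃ ⊔ W₂₃ < E) ∧
    (¬((K₁ ⊆ K₂ ∪ K₃ ∧ K₂ ⊆ K₁ ∪ K₃ ∧ K₃ ⊆ K₁ ∪ K₂) ∧ W₁₂ ⊔ W₁₃ ⊔ W₂₃ < E) →
      Module.finrank ℂ ↥(DD l K₁ ⊓ DD l K₂ ⊓ DD l K₃) = n - 3) :=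
  stmt8_general k n l hgen K₁ K₂ K₃ hne₁₂ hne₁₃ hne₂₃ hc₁ hc₂ hc₃ E hE W₁₂ W₁₃ W₂₃ hW₁₂ hW₁₃ hW₂₃
end

section
/- Let K_1, K_2, K_3 be finite sets, each of cardinality m, such that K_i ⊆ K_j ∪ K_l for every permutation (i, j, l) of (1, 2, 3). Set T = K_1 ∩ K_2 ∩ K_3 and t = |T|. Then m − t is even and |K_i ∩ K_j| − t = (m − t)/2 for every pair i ≠ j. -/
lemma aux_split {α : Type*} [DecidableEq α] (A B C : Finset α) (h : A ⊆ B ∪ C) :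
    A.card + (A ∩ B ∩ C).card = (A ∩ B).card + (A ∩ C).card := by
  have hA : (A ∩ B) ∪ (A ∩ C) = A := by
    rw [← Finset.inter_union_distrib_left, Finset.inter_eq_left.mpr h]
  have hI : (A ∩ B) ∩ (A ∩ C) = A ∩ B ∩ C := by
    ext x; simp; tauto
  have := Finset.card_union_add_card_inter (A ∩ B) (A ∩ C)
  rw [hA, hI] at this
  omega

/-- if `K₁, K₂, K₃` are finite sets of cardinality `m` with each contained in
the union of the other two, and `t = |K₁ ∩ K₂ ∩ K₃|`, then `m - t` is even and
`|Kᵢ ∩ Kⱼ| - t = (m - t) / 2` for each pair `i ≠ j`. -/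
theorem stmt11 {α : Type*} [DecidableEq α] (m : ℕ) (K₁ K₂ K₃ : Finset α)
    (hc₁ : K₁.card = m) (hc₂ : K₂.card = m) (hc₃ : K₃.card = m)
    (h₁ : K₁ ⊆ K₂ ∪ K₃) (h₂ : K₂ ⊆ K₁ ∪ K₃) (h₃ : K₃ ⊆ K₁ ∪ K₂)
    (t : ℕ) (ht : t = (K₁ ∩ K₂ ∩ K₃).card) :
    Even (m - t) ∧
    (K₁ ∩ K₂).card - t = (m - t) / 2 ∧
    (K₁ ∩ K₃).card - t = (m - t) / 2 ∧
    (K₂ ∩ K₃).card - t = (m - t) / 2 := by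
  have e1 := aux_split K₁ K₂ K₃ h₁
  have e2 := aux_split K₂ K₁ K₃ h₂
  have e3 := aux_split K₃ K₁ K₂ h₃
  have c12 : K₂ ∩ K₁ = K₁ ∩ K₂ := Finset.inter_comm _ _
  have c13 : K₃ ∩ K₁ = K₁ ∩ K₃ := Finset.inter_comm _ _
  have c23 : K₃ ∩ K₂ = K₂ ∩ K₃ := Finset.inter_comm _ _
  have t2 : K₂ ∩ K₁ ∩ K₃ = K₁ ∩ K₂ ∩ K₃ := by ext x; simp; tauto
  have t3 : K₁ ∩ K₃ ∩ K₂ = K₁ ∩ K₂ ∩ K₃ := by ext x; simp; tauto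
  rw [c12] at e2
  rw [c13, c23, t3] at e3
  have hsub : t ≤ (K₁ ∩ K₂).card := by
    rw [ht]; exact Finset.card_le_card (Finset.inter_subset_left)
  rw [Nat.even_iff]
  omega
end

section
/- Let K_1, K_2, K_3 be pairwise distinct (k+1)-element subsets of {1, …, n} such that K_1 is not contained in K_2 ∪ K_3. Then D_{K_1} ∩ D_{K_2} ∩ D_{K_3} has codimension 3 in ℂ^n. -/
open Module Submodule

/-! By genericity, for a `(k+1)`-set `K` the functionals `l i`, `i ∈ K`, satisfy one linear
relation `∑ c i • l i = 0`, with every `c i ≠ 0`, and `D_K` is the hyperplane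
`∑_{i ∈ K} c i * x i = 0`. An index in `K₁ \ (K₂ ∪ K₃)` and one in `K₂ \ K₃` make the three
defining forms triangular, hence linearly independent, so their common kernel has
codimension 3. -/

section LinearAlgebra

variable {𝕜 V ι : Type*} [Field 𝕜] [AddCommGroup V] [Module 𝕜 V]

theorem LinearIndependent.surjective_pi [Finite ι] {L : ι → Dual 𝕜 V}
    (h : LinearIndependent 𝕜 L) : Function.Surjective (LinearMap.pi L) := by
  have hfun : LinearIndependent 𝕜 fun i => ⇑(L i) :=
    h.map' (LinearMap.ltoFun 𝕜 V 𝕜 𝕜) (LinearMap.ker_eq_bot.2 DFunLike.coe_injective)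
  rw [← LinearMap.range_eq_top, eq_top_iff, ← span_flip_eq_top_iff_linearIndependent.2 hfun,
    span_le]
  rintro _ ⟨y, rfl⟩
  exact ⟨y, rfl⟩

theorem exists_sum_smul_eq_zero_of_circuit [DecidableEq ι] {v : ι → V} {K : Finset ι}
    (hdep : ¬ LinearIndepOn 𝕜 v K) (hli : ∀ i ∈ K, LinearIndepOn 𝕜 v (K.erase i)) :
    ∃ c : ι → 𝕜, (∀ i ∈ K, c i ≠ 0) ∧ ∑ i ∈ K, c i • v i = 0 := by
  obtain ⟨c, hc, i₁, hi₁, hci₁⟩ := not_linearIndepOn_finset_iff.1 hdep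
  refine ⟨c, fun i₀ hi₀ hci₀ => hci₁ ?_, hc⟩
  have hc' : ∑ i ∈ K.erase i₀, c i • v i = 0 := by
    rwa [← Finset.add_sum_erase K _ hi₀, hci₀, zero_smul, zero_add] at hc
  obtain rfl | hne := eq_or_ne i₁ i₀
  · exact hci₀
  · exact linearIndepOn_finset_iff.1 (hli i₀ hi₀) c hc' i₁ (Finset.mem_erase.2 ⟨hne, hi₁⟩)

theorem finrank_iInf_ker_of_linearIndependent [FiniteDimensional 𝕜 V] [Fintype ι]
    {φ : ι → Dual 𝕜 V} (h : LinearIndependent 𝕜 φ) :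
    finrank 𝕜 ↥(⨅ i, LinearMap.ker (φ i)) = finrank 𝕜 V - Fintype.card ι := by
  have hker : ⨅ i, LinearMap.ker (φ i) = (span 𝕜 (Set.range φ)).dualCoannihilator :=
    SetLike.coe_injective (by ext; simp)
  have hrank := Subspace.finrank_add_finrank_dualCoannihilator_eq (span 𝕜 (Set.range φ))
  rw [finrank_span_eq_card h, ← hker] at hrank
  omega

theorem linearIndependent_of_apply_eq_zero_of_lt {m : ℕ} {φ : Fin m → Dual 𝕜 V} (e : Fin m → V)
    (hdiag : ∀ i, φ i (e i) ≠ 0) (hlt : ∀ i j, i < j → φ j (e i) = 0) :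
    LinearIndependent 𝕜 φ := by
  induction m with
  | zero => exact linearIndependent_empty_type
  | succ m ih =>
    refine linearIndependent_finSucc.2 ⟨ih (Fin.tail e) (fun i => hdiag _)
      (fun i j hij => hlt _ _ (Fin.succ_lt_succ_iff.2 hij)), fun hmem => hdiag 0 ?_⟩
    have hspan : span 𝕜 (Set.range (Fin.tail φ)) ≤ LinearMap.ker (Dual.eval 𝕜 V (e 0)) := by
      rw [span_le]
      rintro _ ⟨j, rfl⟩
      exact hlt 0 j.succ (Fin.succ_pos j)
    exact hspan hmem

def weightedSum (K : Finset ι) (c : ι → 𝕜) : Dual 𝕜 (ι → 𝕜) :=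
  ∑ i ∈ K, c i • LinearMap.proj i

theorem weightedSum_apply (K : Finset ι) (c : ι → 𝕜) (x : ι → 𝕜) :
    weightedSum K c x = ∑ i ∈ K, c i * x i := by
  simp [weightedSum, LinearMap.sum_apply]

theorem weightedSum_single [DecidableEq ι] (K : Finset ι) (c : ι → 𝕜) (j : ι) :
    weightedSum K c (Pi.single j 1) = if j ∈ K then c j else 0 := by
  simp [weightedSum_apply, Pi.single_apply]

end LinearAlgebra

section Discriminantal

variable {ι V : Type*} [DecidableEq ι] [AddCommGroup V] [Module ℂ V]

theorem DD_eq_ker_weightedSum {l : ι → Dual ℂ V} {K : Finset ι} {c : ι → ℂ}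
    (hrel : ∑ i ∈ K, c i • l i = 0) {i₀ : ι} (hi₀ : i₀ ∈ K) (hci₀ : c i₀ ≠ 0)
    (hli : LinearIndepOn ℂ l (K.erase i₀)) :
    DD l K = LinearMap.ker (weightedSum K c) := by
  have hrel_apply (y : V) : ∑ i ∈ K, c i * l i y = 0 := by
    simpa using congrArg (fun f : Dual ℂ V => f y) hrel
  ext x
  rw [LinearMap.mem_ker, weightedSum_apply]
  constructor
  · rintro ⟨y, hy⟩
    rw [Finset.sum_congr rfl fun i hi => by rw [hy i hi]]
    exact hrel_apply y
  · intro hx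
    obtain ⟨y, hy⟩ := hli.surjective_pi fun i : ↥(K.erase i₀) => x i
    have hy' (i) (hi : i ∈ K.erase i₀) : l i y = x i := congrFun hy ⟨i, hi⟩
    refine ⟨y, fun i hi => ?_⟩
    obtain rfl | hne := eq_or_ne i i₀
    · have hx' := hrel_apply y
      rw [← Finset.add_sum_erase K _ hi] at hx hx'
      rw [Finset.sum_congr rfl fun j hj => by rw [hy' j hj]] at hx'
      exact mul_left_cancel₀ hci₀ (by linear_combination hx - hx')
    · exact (hy' i (Finset.mem_erase.2 ⟨hne, hi⟩)).symm

theorem exists_DD_eq_ker_weightedSum [FiniteDimensional ℂ V] {l : ι → Dual ℂ V}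
    (hgen : ∀ S : Finset ι, S.card = finrank ℂ V → LinearIndepOn ℂ l S)
    {K : Finset ι} (hK : K.card = finrank ℂ V + 1) :
    ∃ c : ι → ℂ, (∀ i ∈ K, c i ≠ 0) ∧ DD l K = LinearMap.ker (weightedSum K c) := by
  have hli (i) (hi : i ∈ K) : LinearIndepOn ℂ l (K.erase i) :=
    hgen _ (by rw [Finset.card_erase_of_mem hi, hK]; rfl)
  have hdep : ¬ LinearIndepOn ℂ l K := fun h => by
    have hcard := h.fintype_card_le_finrank
    simp only [Finset.coe_sort_coe, Fintype.card_coe, Subspace.dual_finrank_eq] at hcard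
    omega
  obtain ⟨c, hc, hrel⟩ := exists_sum_smul_eq_zero_of_circuit hdep hli
  obtain ⟨i₀, hi₀⟩ : K.Nonempty := Finset.card_pos.1 (by omega)
  exact ⟨c, hc, DD_eq_ker_weightedSum hrel hi₀ (hc i₀ hi₀) (hli i₀ hi₀)⟩

end Discriminantal

theorem stmt12_general (k n : ℕ)
    (l : Fin n → Module.Dual ℂ (Fin k → ℂ))
    (hgen : ∀ S : Finset (Fin n), S.card = k → LinearIndependent ℂ (fun i : S => l i.1))
    (K₁ K₂ K₃ : Finset (Fin n))
    (hne₂₃ : K₂ ≠ K₃)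
    (hc₁ : K₁.card = k + 1) (hc₂ : K₂.card = k + 1) (hc₃ : K₃.card = k + 1)
    (hnsub : ¬ K₁ ⊆ K₂ ∪ K₃) :
    Module.finrank ℂ ↥(DD l K₁ ⊓ DD l K₂ ⊓ DD l K₃) = n - 3 := by
  have hgen' (S : Finset (Fin n)) (hS : S.card = finrank ℂ (Fin k → ℂ)) : LinearIndepOn ℂ l S :=
    hgen S (by simpa using hS)
  obtain ⟨c₁, hnz₁, hD₁⟩ := exists_DD_eq_ker_weightedSum hgen' (K := K₁) (by simpa)
  obtain ⟨c₂, hnz₂, hD₂⟩ := exists_DD_eq_ker_weightedSum hgen' (K := K₂) (by simpa)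
  obtain ⟨c₃, hnz₃, hD₃⟩ := exists_DD_eq_ker_weightedSum hgen' (K := K₃) (by simpa)
  obtain ⟨i, hi₁, hi₂₃⟩ := Finset.not_subset.1 hnsub
  rw [Finset.mem_union, not_or] at hi₂₃
  obtain ⟨j, hj₂, hj₃⟩ := Finset.not_subset.1 fun h =>
    hne₂₃ (Finset.eq_of_subset_of_card_le h (by omega))
  obtain ⟨j', hj'₃⟩ : K₃.Nonempty := Finset.card_pos.1 (by omega)
  set φ := ![weightedSum K₁ c₁, weightedSum K₂ c₂, weightedSum K₃ c₃]
  have hind : LinearIndependent ℂ φ := by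
    refine linearIndependent_of_apply_eq_zero_of_lt
      ![Pi.single i 1, Pi.single j 1, Pi.single j' 1] (fun m => ?_) (fun a b hab => ?_)
    · fin_cases m <;> simp [φ, weightedSum_single, hi₁, hj₂, hj'₃, hnz₁, hnz₂, hnz₃]
    · fin_cases a <;> fin_cases b <;> simp_all [φ, weightedSum_single]
  have hinf : DD l K₁ ⊓ DD l K₂ ⊓ DD l K₃ = ⨅ m, LinearMap.ker (φ m) := by
    ext x
    simp [hD₁, hD₂, hD₃, Submodule.mem_iInf, Fin.forall_fin_succ, φ, and_assoc]
  rw [hinf, finrank_iInf_ker_of_linearIndependent hind]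
  simp

/-- if `K₁, K₂, K₃` are pairwise distinct `(k+1)`-element subsets with `K₁` not
contained in `K₂ ∪ K₃`, then `D_{K₁} ∩ D_{K₂} ∩ D_{K₃}` has codimension 3 in `ℂ^n`. -/
theorem stmt12 (k n : ℕ) (hk : 0 < k) (hkn : k < n)
    (l : Fin n → Module.Dual ℂ (Fin k → ℂ))
    (hgen : ∀ S : Finset (Fin n), S.card = k → LinearIndependent ℂ (fun i : S => l i.1))
    (K₁ K₂ K₃ : Finset (Fin n))
    (hne₁₂ : K₁ ≠ K₂) (hne₁₃ : K₁ ≠ K₃) (hne₂₃ : K₂ ≠ K₃)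
    (hc₁ : K₁.card = k + 1) (hc₂ : K₂.card = k + 1) (hc₃ : K₃.card = k + 1)
    (hnsub : ¬ K₁ ⊆ K₂ ∪ K₃) :
    Module.finrank ℂ ↥(DD l K₁ ⊓ DD l K₂ ⊓ DD l K₃) = n - 3 :=
  stmt12_general k n l hgen K₁ K₂ K₃ hne₂₃ hc₁ hc₂ hc₃ hnsub
end

section
/- Let J_1, …, J_p be subsets of {1, …, n}, each of cardinality at least 3. If there exists a permutation σ of {1, …, p} such that |J_{σ(i)} ∩ J_{σ(i+1)}| ≥ 2 for all 1 ≤ i < p, then D_{J_1} ∩ … ∩ D_{J_p} = D_{J_1 ∪ … ∪ J_p}. -/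
open Module Submodule

/-- Two linearly independent functionals on `ℂ²` jointly separate points. -/
lemma eq_of_two_functionals {ι : Type*} (l : ι → Module.Dual ℂ (Fin 2 → ℂ))
    {a b : ι} (h : LinearIndependent ℂ ![l a, l b])
    {u v : Fin 2 → ℂ} (ha : l a u = l a v) (hb : l b u = l b v) : u = v := by
  have hcard : Fintype.card (Fin 2) = finrank ℂ (Module.Dual ℂ (Fin 2 → ℂ)) := by
    simp [Subspace.dual_finrank_eq]
  set B := basisOfLinearIndependentOfCardEqFinrank h hcard with hB
  have hBcoe : ⇑B = ![l a, l b] := coe_basisOfLinearIndependentOfCardEqFinrank h hcard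
  have hw : ∀ φ : Module.Dual ℂ (Fin 2 → ℂ), φ (u - v) = 0 := by
    intro φ
    have hrepr := B.sum_repr φ
    have : φ (u - v) = (∑ i, B.repr φ i • B i) (u - v) := by rw [hrepr]
    rw [this]
    simp only [LinearMap.coe_sum, Finset.sum_apply, LinearMap.smul_apply]
    apply Finset.sum_eq_zero
    intro i _
    have hi : (B i) (u - v) = 0 := by
      fin_cases i <;> simp [hBcoe, map_sub, ha, hb, sub_eq_zero]
    rw [hi, smul_zero]
  have := (Module.forall_dual_apply_eq_zero_iff ℂ (u - v)).1 hw
  exact sub_eq_zero.1 this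

/-- Lemma `lem:union`: if `J₁, …, J_p ⊆ {1,…,n}` each have cardinality `≥ 3`
and some permutation `σ` of `{1,…,p}` satisfies `|J_{σ(i)} ∩ J_{σ(i+1)}| ≥ 2` for all
`1 ≤ i < p`, then `D_{J₁} ∩ … ∩ D_{J_p} = D_{J₁ ∪ … ∪ J_p}`. -/
theorem stmt15 (n : ℕ) (hn : 3 ≤ n)
    (l : Fin n → Module.Dual ℂ (Fin 2 → ℂ))
    (hgen : ∀ i j : Fin n, i ≠ j → LinearIndependent ℂ ![l i, l j])
    (p : ℕ) (J : Fin p → Finset (Fin n)) (hJ : ∀ i, 3 ≤ (J i).card)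
    (σ : Equiv.Perm (Fin p))
    (hchain : ∀ i : Fin p, ∀ h : (i : ℕ) + 1 < p,
      2 ≤ (J (σ i) ∩ J (σ ⟨(i : ℕ) + 1, h⟩)).card) :
    (⨅ i, DD l (J i)) = DD l (Finset.univ.biUnion J) := by
  apply le_antisymm
  · intro x hx
    rcases Nat.eq_zero_or_pos p with hp | hp
    · refine ⟨0, fun i hi => ?_⟩
      rcases Finset.mem_biUnion.1 hi with ⟨a, -, -⟩
      subst hp
      exact a.elim0
    have hx' : ∀ i, x ∈ DD l (J i) := fun i => (Submodule.mem_iInf _).1 hx i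
    choose y hy using hx'
    -- all witnesses along the chain agree
    have key : ∀ m : ℕ, ∀ hm : m < p, y (σ ⟨m, hm⟩) = y (σ ⟨0, hp⟩) := by
      intro m
      induction m with
      | zero => intro hm; rfl
      | succ k ih =>
        intro hm
        have hk : k < p := Nat.lt_of_succ_lt hm
        have hcard := hchain ⟨k, hk⟩ hm
        obtain ⟨a, hamem, b, hbmem, hab⟩ := Finset.one_lt_card.1 hcard
        have haL : a ∈ J (σ ⟨k, hk⟩) := (Finset.mem_inter.1 hamem).1
        have haR : a ∈ J (σ ⟨k + 1, hm⟩) := (Finset.mem_inter.1 hamem).2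
        have hbL : b ∈ J (σ ⟨k, hk⟩) := (Finset.mem_inter.1 hbmem).1
        have hbR : b ∈ J (σ ⟨k + 1, hm⟩) := (Finset.mem_inter.1 hbmem).2
        have hlin := hgen a b hab
        have ha' : l a (y (σ ⟨k + 1, hm⟩)) = l a (y (σ ⟨k, hk⟩)) := by
          rw [← hy _ a haR, ← hy _ a haL]
        have hb' : l b (y (σ ⟨k + 1, hm⟩)) = l b (y (σ ⟨k, hk⟩)) := by
          rw [← hy _ b hbR, ← hy _ b hbL]
        have := eq_of_two_functionals l hlin ha' hb'
        rw [this, ih hk]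
    have hall : ∀ i : Fin p, y i = y (σ ⟨0, hp⟩) := by
      intro i
      have : σ (σ.symm i) = i := σ.apply_symm_apply i
      have hk := key (σ.symm i) (σ.symm i).isLt
      simpa [Fin.eta, this] using hk
    refine ⟨y (σ ⟨0, hp⟩), fun j hj => ?_⟩
    rcases Finset.mem_biUnion.1 hj with ⟨i, -, hji⟩
    rw [← hall i]
    exact hy i j hji
  · refine le_iInf fun i => ?_
    rintro x ⟨y, hy⟩
    exact ⟨y, fun j hj => hy j (Finset.mem_biUnion.2 ⟨i, Finset.mem_univ i, hj⟩)⟩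
end

section
/- For every finite family K_1, …, K_p of 3-element subsets of {1, …, n}, there exist subsets J_1, …, J_r of {1, …, n}, each of which is a union of some of the sets K_i, such that every K_i is contained in some J_j, |J_j ∩ J_{j'}| ≤ 1 for all j ≠ j', and D_{K_1} ∩ … ∩ D_{K_p} = D_{J_1} ∩ … ∩ D_{J_r}. -/
open Module Submodule

lemma eq_of_two (a b : Module.Dual ℂ (Fin 2 → ℂ)) (h : LinearIndependent ℂ ![a, b])
    (y z : Fin 2 → ℂ) (ha : a y = a z) (hb : b y = b z) : y = z := by
  have hsp : Submodule.span ℂ (Set.range ![a, b]) = ⊤ := by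
    apply h.span_eq_top_of_card_eq_finrank
    simp [Subspace.dual_finrank_eq]
  rw [← sub_eq_zero, ← Module.forall_dual_apply_eq_zero_iff ℂ (y - z)]
  intro φ
  have hφ : φ ∈ Submodule.span ℂ (Set.range ![a, b]) := hsp ▸ Submodule.mem_top
  rw [show Set.range ![a, b] = {a, b} by simp [Matrix.range_cons, Matrix.range_empty, Set.pair_comm]] at hφ
  obtain ⟨c, d, rfl⟩ := Submodule.mem_span_pair.mp hφ
  simp [map_sub, ha, hb]

lemma DD_antitone_s17 {ι V : Type*} [AddCommGroup V] [Module ℂ V]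
    (l : ι → Module.Dual ℂ V) {A B : Finset ι} (h : A ⊆ B) : DD l B ≤ DD l A := by
  rintro x ⟨y, hy⟩
  exact ⟨y, fun i hi => hy i (h hi)⟩

lemma DD_inf_union {n : ℕ} (l : Fin n → Module.Dual ℂ (Fin 2 → ℂ))
    (hgen : ∀ i j : Fin n, i ≠ j → LinearIndependent ℂ ![l i, l j])
    {A B : Finset (Fin n)} (h : 2 ≤ (A ∩ B).card) :
    DD l A ⊓ DD l B = DD l (A ∪ B) := by
  apply le_antisymm
  · rintro x ⟨⟨y, hy⟩, ⟨z, hz⟩⟩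
    obtain ⟨a, ha, b, hb, hab⟩ := Finset.one_lt_card.mp h
    have haA := Finset.mem_inter.mp ha
    have hbA := Finset.mem_inter.mp hb
    have hyz : y = z := by
      refine eq_of_two (l a) (l b) (hgen a b hab) y z ?_ ?_
      · rw [← hy a haA.1, ← hz a haA.2]
      · rw [← hy b hbA.1, ← hz b hbA.2]
    refine ⟨y, fun i hi => ?_⟩
    rcases Finset.mem_union.mp hi with hi | hi
    · exact hy i hi
    · rw [hyz]; exact hz i hi
  · exact le_inf (DD_antitone_s17 l Finset.subset_union_left)
      (DD_antitone_s17 l Finset.subset_union_right)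

lemma key {n : ℕ} (l : Fin n → Module.Dual ℂ (Fin 2 → ℂ))
    (hgen : ∀ i j : Fin n, i ≠ j → LinearIndependent ℂ ![l i, l j]) :
    ∀ N : ℕ, ∀ F : Finset (Finset (Fin n)), F.card ≤ N →
    ∃ G : Finset (Finset (Fin n)),
      (∀ A ∈ G, ∃ S : Finset (Finset (Fin n)), S ⊆ F ∧ S.Nonempty ∧ A = S.sup id) ∧
      (∀ B ∈ F, ∃ A ∈ G, B ⊆ A) ∧
      (∀ A ∈ G, ∀ B ∈ G, A ≠ B → (A ∩ B).card ≤ 1) ∧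
      G.inf (DD l) = F.inf (DD l) := by
  intro N
  induction N with
  | zero =>
    intro F hF
    have : F = ∅ := Finset.card_eq_zero.mp (Nat.le_zero.mp hF)
    subst this
    exact ⟨∅, by simp, by simp, by simp, rfl⟩
  | succ N ih =>
    intro F hF
    by_cases hp : ∀ A ∈ F, ∀ B ∈ F, A ≠ B → (A ∩ B).card ≤ 1
    · refine ⟨F, fun A hA => ⟨{A}, by simpa using hA, Finset.singleton_nonempty A, by simp⟩,
        fun B hB => ⟨B, hB, Finset.Subset.refl B⟩, hp, rfl⟩
    · push_neg at hp
      obtain ⟨A, hA, B, hB, hAB, hcard⟩ := hp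
      have hcard2 : 2 ≤ (A ∩ B).card := hcard
      have hBA : B ∈ F.erase A := Finset.mem_erase.mpr ⟨hAB.symm, hB⟩
      set F' : Finset (Finset (Fin n)) := insert (A ∪ B) ((F.erase A).erase B) with hF'
      have hcardF : F'.card ≤ N := by
        have h1 : ((F.erase A).erase B).card = F.card - 2 := by
          rw [Finset.card_erase_of_mem hBA, Finset.card_erase_of_mem hA]
          omega
        have h2 : F'.card ≤ ((F.erase A).erase B).card + 1 := Finset.card_insert_le _ _
        have h3 : 1 ≤ F.card := Finset.card_pos.mpr ⟨A, hA⟩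
        have h4 : 2 ≤ F.card := Finset.one_lt_card.mpr ⟨A, hA, B, hB, hAB⟩
        omega
      obtain ⟨G, hG1, hG2, hG3, hG4⟩ := ih F' hcardF
      refine ⟨G, ?_, ?_, hG3, ?_⟩
      · intro A' hA'
        obtain ⟨S, hSF, hSne, hsup⟩ := hG1 A' hA'
        classical
        refine ⟨S.biUnion (fun C => if C = A ∪ B then {A, B} else {C}), ?_, ?_, ?_⟩
        · intro x hx
          obtain ⟨C, hC, hxC⟩ := Finset.mem_biUnion.mp hx
          split_ifs at hxC with hCe
          · rcases Finset.mem_insert.mp hxC with h | h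
            · subst h; exact hA
            · rw [Finset.mem_singleton.mp h]; exact hB
          · rw [Finset.mem_singleton.mp hxC]
            have := hSF hC
            rw [hF'] at this
            rcases Finset.mem_insert.mp this with h | h
            · exact absurd h hCe
            · exact Finset.mem_of_mem_erase (Finset.mem_of_mem_erase h)
        · obtain ⟨C, hC⟩ := hSne
          exact Finset.Nonempty.biUnion ⟨C, hC⟩ (fun x _ => by split_ifs <;> simp)
        · rw [Finset.sup_biUnion]
          rw [hsup]
          apply Finset.sup_congr rfl
          intro C hC
          split_ifs with hCe
          · subst hCe
            simp [Finset.sup_insert, Finset.sup_singleton, Finset.sup_eq_union]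
          · simp
      · intro B' hB'
        by_cases hBA' : B' = A
        · obtain ⟨A', hA', hsub⟩ := hG2 (A ∪ B) (Finset.mem_insert_self _ _)
          exact ⟨A', hA', hBA' ▸ Finset.subset_union_left.trans hsub⟩
        · by_cases hBB' : B' = B
          · obtain ⟨A', hA', hsub⟩ := hG2 (A ∪ B) (Finset.mem_insert_self _ _)
            exact ⟨A', hA', hBB' ▸ Finset.subset_union_right.trans hsub⟩
          · exact hG2 B' (Finset.mem_insert_of_mem
              (Finset.mem_erase.mpr ⟨hBB', Finset.mem_erase.mpr ⟨hBA', hB'⟩⟩))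
      · rw [hG4]
        rw [hF', Finset.inf_insert]
        conv_rhs => rw [← Finset.insert_erase hA, Finset.inf_insert,
          ← Finset.insert_erase hBA, Finset.inf_insert]
        rw [← inf_assoc, DD_inf_union l hgen hcard2]

/-- every intersection of hyperplanes `D_{K₁} ∩ … ∩ D_{K_p}` of `B(n,2)` can be
rewritten as `D_{J₁} ∩ … ∩ D_{J_r}` where each `Jⱼ` is a union of some of the `Kᵢ`, every
`Kᵢ` is contained in some `Jⱼ`, and `|Jⱼ ∩ J_{j'}| ≤ 1` for `j ≠ j'`. -/
theorem stmt17 (n : ℕ) (hn : 3 ≤ n)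
    (l : Fin n → Module.Dual ℂ (Fin 2 → ℂ))
    (hgen : ∀ i j : Fin n, i ≠ j → LinearIndependent ℂ ![l i, l j])
    (p : ℕ) (K : Fin p → Finset (Fin n)) (hK : ∀ i, (K i).card = 3) :
    ∃ (r : ℕ) (J : Fin r → Finset (Fin n)),
      (∀ j, ∃ S : Finset (Fin p), S.Nonempty ∧ J j = S.biUnion K) ∧
      (∀ i, ∃ j, K i ⊆ J j) ∧
      (∀ j j', j ≠ j' → (J j ∩ J j').card ≤ 1) ∧
      (⨅ i, DD l (K i)) = ⨅ j, DD l (J j) := by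
  classical
  set F : Finset (Finset (Fin n)) := Finset.univ.image K with hFdef
  obtain ⟨G, hG1, hG2, hG3, hG4⟩ := key l hgen F.card F le_rfl
  refine ⟨G.card, fun j => (G.equivFin.symm j : Finset (Fin n)), ?_, ?_, ?_, ?_⟩
  · intro j
    obtain ⟨S, hSF, hSne, hsup⟩ := hG1 _ (G.equivFin.symm j).2
    refine ⟨Finset.univ.filter (fun i => K i ∈ S), ?_, ?_⟩
    · obtain ⟨C, hC⟩ := hSne
      obtain ⟨i, _, hi⟩ := Finset.mem_image.mp (hSF hC)
      exact ⟨i, Finset.mem_filter.mpr ⟨Finset.mem_univ i, hi ▸ hC⟩⟩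
    · show (G.equivFin.symm j : Finset (Fin n)) = _
      rw [hsup]
      ext x
      simp only [Finset.mem_biUnion, Finset.mem_filter, Finset.mem_univ, true_and,
        Finset.mem_sup, id]
      constructor
      · rintro ⟨C, hC, hx⟩
        obtain ⟨i, _, hi⟩ := Finset.mem_image.mp (hSF hC)
        exact ⟨i, hi ▸ hC, hi ▸ hx⟩
      · rintro ⟨i, hi, hx⟩
        exact ⟨K i, hi, hx⟩
  · intro i
    obtain ⟨A, hA, hsub⟩ := hG2 (K i) (Finset.mem_image_of_mem K (Finset.mem_univ i))
    refine ⟨G.equivFin ⟨A, hA⟩, ?_⟩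
    simpa using hsub
  · intro j j' hjj'
    apply hG3 _ (G.equivFin.symm j).2 _ (G.equivFin.symm j').2
    intro h
    exact hjj' (G.equivFin.symm.injective (Subtype.coe_injective h))
  · have h1 : F.inf (DD l) = ⨅ i, DD l (K i) := by
      rw [hFdef, Finset.inf_image]
      rw [Finset.inf_eq_iInf]
      simp
    have h2 : G.inf (DD l) = ⨅ j : Fin G.card, DD l (G.equivFin.symm j) := by
      rw [Finset.inf_eq_iInf]
      apply le_antisymm
      · exact le_iInf fun j => iInf₂_le _ (G.equivFin.symm j).2
      · refine le_iInf₂ fun A hA => ?_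
        have := iInf_le (fun j => DD l ((G.equivFin.symm j : Finset (Fin n)))) (G.equivFin ⟨A, hA⟩)
        simpa using this
    rw [← h1, ← hG4, h2]
end

section
/- Let V be a k-dimensional complex vector space, n > k, and l_1, …, l_n ∈ V* linear functionals such that every k of them are linearly independent. Define L : V → ℂ^n by L(v) = (l_1(v), …, l_n(v)); L is injective. Let W = ℂ^n / L(V), let q : ℂ^n → W be the quotient map, and let m_i = q(e_i) be the images of the standard basis vectors (the Gale transform of l_1, …, l_n). For K ⊆ {1, …, n} with |K| = k + 1 let D_K = {c ∈ ℂ^n : there exists v ∈ V with l_i(v) = c_i for all i ∈ K}. Then for every such K, D_K = q^{-1}(span{m_i : i ∈ {1, …, n} ∖ K}), and span{m_i : i ∉ K} is a linear hyperplane in W. (Thus the essential part of the discriminantal arrangement consists of the hyperplanes in W spanned by the (n − k − 1)-element subsets of the Gale transform.) -/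
open Module Submodule

/-! Any `k` of the `lᵢ` already have common kernel `0`, so `L` is injective, and more generally
the coordinate subspace `E_K = span {eᵢ : i ∉ K}` of vectors vanishing on `K` meets `L(V)` only
in `0` once `|K| ≥ k`. Unwinding the definition, `D_K = E_K + L(V) = q⁻¹(q(E_K))`, and
`q(E_K) = span {mᵢ : i ∉ K}`; since `q` is injective on `E_K`, this span has dimension
`|Kᶜ| = n - k - 1`. -/

section CoordinateSubspace

variable {𝕜 ι : Type*} [Field 𝕜] [Fintype ι] [DecidableEq ι]

theorem mem_span_single_image_iff {s : Set ι} {x : ι → 𝕜} :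
    x ∈ span 𝕜 ((Pi.single · (1 : 𝕜)) '' s) ↔ ∀ i ∉ s, x i = 0 := by
  have : (Pi.single · (1 : 𝕜)) = Pi.basisFun 𝕜 ι := funext fun i => (Pi.basisFun_apply 𝕜 ι i).symm
  rw [this, Basis.mem_span_image]
  simp [Set.subset_def, not_imp_comm]

theorem finrank_span_single_image (s : Finset ι) :
    finrank 𝕜 (span 𝕜 ((Pi.single · (1 : 𝕜)) '' (s : Set ι))) = s.card := by
  have hli : LinearIndependent 𝕜 (fun i : (s : Set ι) => Pi.single (M := fun _ => 𝕜) (i : ι) 1) := by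
    simpa [Function.comp_def] using
      (Pi.basisFun 𝕜 ι).linearIndependent.comp _ Subtype.val_injective
  rw [Set.image_eq_range, finrank_span_eq_card hli]
  simp

end CoordinateSubspace

theorem finrank_map_eq_of_disjoint_ker {𝕜 M N : Type*} [Field 𝕜] [AddCommGroup M] [Module 𝕜 M]
    [AddCommGroup N] [Module 𝕜 N] {p : Submodule 𝕜 M} [FiniteDimensional 𝕜 p] (f : M →ₗ[𝕜] N)
    (h : Disjoint p (LinearMap.ker f)) : finrank 𝕜 (p.map f) = finrank 𝕜 p := by
  rw [← LinearMap.range_domRestrict]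
  exact LinearMap.finrank_range_of_inj (LinearMap.injective_domRestrict_iff.mpr h)

section GenericFunctionals

variable {𝕜 V ι : Type*} [Field 𝕜] [AddCommGroup V] [Module 𝕜 V] [FiniteDimensional 𝕜 V]

theorem eq_zero_of_linearIndependent_dual_apply_eq_zero
    (l : ι → Dual 𝕜 V) {S : Finset ι} (hli : LinearIndependent 𝕜 (fun i : S => l i))
    (hS : S.card = finrank 𝕜 V) {y : V} (hy : ∀ i ∈ S, l i y = 0) : y = 0 := by
  have hspan := hli.span_eq_top_of_card_eq_finrank'
    (by rw [Fintype.card_coe, hS, Subspace.dual_finrank_eq])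
  have heval : Dual.eval 𝕜 V y = 0 := LinearMap.ext_on_range hspan fun i => hy i i.2
  exact (forall_dual_apply_eq_zero_iff 𝕜 y).mp (LinearMap.ext_iff.mp heval)

variable {l : ι → Dual 𝕜 V}
  (hgen : ∀ S : Finset ι, S.card = finrank 𝕜 V → LinearIndependent 𝕜 (fun i : S => l i.1))
include hgen

theorem eq_zero_of_dual_apply_eq_zero_of_finrank_le_card {J : Finset ι}
    (hJ : finrank 𝕜 V ≤ J.card) {y : V} (hy : ∀ i ∈ J, l i y = 0) : y = 0 := by
  obtain ⟨S, hSJ, hS⟩ := Finset.exists_subset_card_eq hJ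
  exact eq_zero_of_linearIndependent_dual_apply_eq_zero l (hgen S hS) hS fun i hi => hy i (hSJ hi)

theorem injective_pi_of_finrank_le_card [Fintype ι] (h : finrank 𝕜 V ≤ Fintype.card ι) :
    Function.Injective (LinearMap.pi l) := by
  refine (injective_iff_map_eq_zero _).mpr fun y hy =>
    eq_zero_of_dual_apply_eq_zero_of_finrank_le_card hgen (J := Finset.univ) h fun i _ => ?_
  exact congrFun hy i

theorem disjoint_span_single_image_range_pi [Fintype ι] [DecidableEq ι] {J : Finset ι}
    (hJ : finrank 𝕜 V ≤ J.card) :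
    Disjoint (span 𝕜 ((Pi.single · (1 : 𝕜)) '' {i | i ∉ J})) (LinearMap.range (LinearMap.pi l)) := by
  rw [disjoint_def]
  rintro _ hx ⟨y, rfl⟩
  rw [mem_span_single_image_iff] at hx
  rw [eq_zero_of_dual_apply_eq_zero_of_finrank_le_card hgen hJ fun i hi => hx i (by simpa),
    map_zero]

end GenericFunctionals

theorem DD_eq_span_single_image_sup_range_pi {ι V : Type*} [Fintype ι] [DecidableEq ι]
    [AddCommGroup V] [Module ℂ V] (l : ι → Dual ℂ V) (J : Finset ι) :
    DD l J = span ℂ ((Pi.single · (1 : ℂ)) '' {i | i ∉ J}) ⊔ LinearMap.range (LinearMap.pi l) := by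
  ext x
  simp only [mem_sup, mem_span_single_image_iff, LinearMap.mem_range]
  constructor
  · rintro ⟨y, hy⟩
    exact ⟨x - LinearMap.pi l y, fun i hi => by simpa [sub_eq_zero] using hy i (by simpa using hi),
      _, ⟨y, rfl⟩, sub_add_cancel _ _⟩
  · rintro ⟨z, hz, _, ⟨y, rfl⟩, rfl⟩
    exact ⟨y, fun i hi => by simp [hz i (by simpa using hi)]⟩

theorem stmt18_general (k n : ℕ) (hkn : k < n)
    (V : Type*) [AddCommGroup V] [Module ℂ V] [FiniteDimensional ℂ V]
    (hdim : Module.finrank ℂ V = k)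
    (l : Fin n → Module.Dual ℂ V)
    (hgen : ∀ S : Finset (Fin n), S.card = k → LinearIndependent ℂ (fun i : S => l i.1))
    (L : V →ₗ[ℂ] (Fin n → ℂ)) (hL : L = LinearMap.pi l)
    (m : Fin n → (Fin n → ℂ) ⧸ LinearMap.range L)
    (hm : m = fun i => Submodule.mkQ (LinearMap.range L) (Pi.single i 1)) :
    Function.Injective L ∧
    ∀ K : Finset (Fin n), K.card = k + 1 →
      DD l K = Submodule.comap (Submodule.mkQ (LinearMap.range L))
          (Submodule.span ℂ (m '' {i | i ∉ K})) ∧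
      Module.finrank ℂ ↥(Submodule.span ℂ (m '' {i | i ∉ K})) = n - k - 1 := by
  subst hL hm hdim
  set q := (LinearMap.range (LinearMap.pi l)).mkQ
  refine ⟨injective_pi_of_finrank_le_card hgen (by simpa using hkn.le), fun K hK => ?_⟩
  have hspan : span ℂ ((fun i => q (Pi.single i 1)) '' {i | i ∉ K}) =
      (span ℂ ((Pi.single · (1 : ℂ)) '' {i | i ∉ K})).map q := by
    rw [map_span, Set.image_image]
  have hcompl : {i | i ∉ K} = ((Kᶜ : Finset (Fin n)) : Set (Fin n)) := by ext; simp
  have hdisj := disjoint_span_single_image_range_pi hgen (J := K) (by omega)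
  rw [hspan]
  refine ⟨by rw [comap_map_mkQ, sup_comm, DD_eq_span_single_image_sup_range_pi], ?_⟩
  rw [finrank_map_eq_of_disjoint_ker q (by rwa [ker_mkQ]), hcompl, finrank_span_single_image,
    Finset.card_compl, Fintype.card_fin, hK]
  omega

/-- for a generic arrangement given by `l₁, …, l_n ∈ V*`, `dim V = k`, the map
`L(v) = (l₁(v), …, l_n(v))` is injective, and for every `(k+1)`-set `K` the hyperplane `D_K`
is the preimage under the quotient map `q : ℂⁿ → W = ℂⁿ/L(V)` of the span of the Gale-transform
vectors `m_i = q(e_i)`, `i ∉ K`, which is a linear hyperplane ((n-k-1)-dimensional subspace)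
of `W`. -/
theorem stmt18 (k n : ℕ) (hk : 0 < k) (hkn : k < n)
    (V : Type*) [AddCommGroup V] [Module ℂ V] [FiniteDimensional ℂ V]
    (hdim : Module.finrank ℂ V = k)
    (l : Fin n → Module.Dual ℂ V)
    (hgen : ∀ S : Finset (Fin n), S.card = k → LinearIndependent ℂ (fun i : S => l i.1))
    (L : V →ₗ[ℂ] (Fin n → ℂ)) (hL : L = LinearMap.pi l)
    (m : Fin n → (Fin n → ℂ) ⧸ LinearMap.range L)
    (hm : m = fun i => Submodule.mkQ (LinearMap.range L) (Pi.single i 1)) :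
    Function.Injective L ∧
    ∀ K : Finset (Fin n), K.card = k + 1 →
      DD l K = Submodule.comap (Submodule.mkQ (LinearMap.range L))
          (Submodule.span ℂ (m '' {i | i ∉ K})) ∧
      Module.finrank ℂ ↥(Submodule.span ℂ (m '' {i | i ∉ K})) = n - k - 1 :=
  stmt18_general k n hkn V hdim l hgen L hL m hm
end

section
/- Let v_1, …, v_6 and w_1, …, w_6 be vectors in ℂ³ such that any three of the v_i are linearly independent and any three of the w_i are linearly independent, and suppose the two collections are associated (Gale dual): there exists an invertible diagonal 6×6 matrix Λ with X·Λ·Yᵀ = 0, where X and Y are the 3×6 matrices with columns v_1, …, v_6 and w_1, …, w_6 respectively. Then the following two conditions are equivalent: (i) there exist a partition of {1, …, 6} into three two-element sets {a, b}, {c, d}, {e, f} and a nonzero vector u ∈ ℂ³ with u ∈ span{v_a, v_b} ∩ span{v_c, v_d} ∩ span{v_e, v_f}; (ii) the same condition holds with the w_i in place of the v_i. (Geometrically: the six points of ℙ² determined by the v_i admit a partition into three pairs whose connecting lines are concurrent if and only if their Gale transform does.) -/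
open Module Submodule Matrix


-- helper 1: triple coefficient lemma
private lemma triple_coeff (v : Fin 6 → Fin 3 → ℂ)
    (hv : ∀ S : Finset (Fin 6), S.card = 3 → LinearIndependent ℂ (fun i : S => v i.1))
    {a b c : Fin 6} (hab : a ≠ b) (hac : a ≠ c) (hbc : b ≠ c) :
    ∀ x y z : ℂ, x • v a + y • v b + z • v c = 0 → x = 0 ∧ y = 0 ∧ z = 0 := by
  intro x y z hxyz
  set S : Finset (Fin 6) := {a, b, c} with hS
  have hScard : S.card = 3 := Finset.card_eq_three.mpr ⟨a, b, c, hab, hac, hbc, rfl⟩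
  have li := hv S hScard
  rw [Fintype.linearIndependent_iff] at li
  set f : Fin 6 → ℂ := fun i => if i = a then x else if i = b then y else z with hf
  have hmem : ∀ i ∈ S, True := fun _ _ => trivial
  have ha : a ∈ S := by simp [hS]
  have hb : b ∈ S := by simp [hS]
  have hc : c ∈ S := by simp [hS]
  have hsum : ∑ i : S, f i.1 • v i.1 = x • v a + y • v b + z • v c := by
    rw [Finset.sum_coe_sort S (fun i => f i • v i)]
    have h1 : a ∉ ({b, c} : Finset (Fin 6)) := by simp [hab, hac]
    have h2 : b ∉ ({c} : Finset (Fin 6)) := by simp [hbc]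
    rw [hS]
    rw [Finset.sum_insert h1, Finset.sum_insert h2, Finset.sum_singleton]
    simp [hf, Ne.symm hab, Ne.symm hac, Ne.symm hbc, add_assoc]
  have := li (fun i => f i.1) (by rw [hsum]; exact hxyz)
  refine ⟨?_, ?_, ?_⟩
  · have := this ⟨a, ha⟩; simpa [hf] using this
  · have := this ⟨b, hb⟩; simpa [hf, Ne.symm hab] using this
  · have := this ⟨c, hc⟩; simpa [hf, Ne.symm hac, Ne.symm hbc] using this


private lemma mem_span_pair_of_dot (x y n u : Fin 3 → ℂ) (hn : n ≠ 0)
    (hpair : ∀ s t : ℂ, s • x + t • y = 0 → s = 0 ∧ t = 0)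
    (hx : x ⬝ᵥ n = 0) (hy : y ⬝ᵥ n = 0) (hu : u ⬝ᵥ n = 0) :
    u ∈ Submodule.span ℂ {x, y} := by
  let g : (Fin 3 → ℂ) →ₗ[ℂ] ℂ :=
    { toFun := fun z => z ⬝ᵥ n
      map_add' := fun a b => add_dotProduct a b n
      map_smul' := fun c a => smul_dotProduct c a n }
  obtain ⟨j, hj⟩ := Function.ne_iff.mp hn
  have hsurj : Function.Surjective g := by
    intro t
    refine ⟨(t / n j) • (Pi.single j 1 : Fin 3 → ℂ), ?_⟩
    show ((t / n j) • (Pi.single j 1 : Fin 3 → ℂ)) ⬝ᵥ n = t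
    rw [smul_dotProduct, single_dotProduct]
    simp only [one_mul, smul_eq_mul]
    have hj' : n j ≠ 0 := by simpa using hj
    field_simp
  have hrange : LinearMap.range g = ⊤ := LinearMap.range_eq_top.mpr hsurj
  have hkerrank : finrank ℂ (LinearMap.ker g) = 2 := by
    have h3 := LinearMap.finrank_range_add_finrank_ker g
    rw [hrange] at h3
    simp only [finrank_top] at h3
    have : finrank ℂ ℂ = 1 := Module.finrank_self ℂ
    have h4 : finrank ℂ (Fin 3 → ℂ) = 3 := by simp
    omega
  have li : LinearIndependent ℂ ![x, y] := LinearIndependent.pair_iff.mpr hpair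
  have hrg : Set.range ![x, y] = {x, y} := by
    simp [Matrix.range_cons, Matrix.range_empty, Set.pair_comm]
  have hspanrank : finrank ℂ (Submodule.span ℂ ({x, y} : Set (Fin 3 → ℂ))) = 2 := by
    have := finrank_span_eq_card li
    rw [hrg] at this
    simpa using this
  have hle : Submodule.span ℂ ({x, y} : Set (Fin 3 → ℂ)) ≤ LinearMap.ker g := by
    rw [Submodule.span_le]
    intro z hz
    rcases hz with rfl | hz
    · exact LinearMap.mem_ker.mpr hx
    · rcases hz with rfl
      exact LinearMap.mem_ker.mpr hy
  have heq : Submodule.span ℂ ({x, y} : Set (Fin 3 → ℂ)) = LinearMap.ker g :=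
    Submodule.eq_of_le_of_finrank_le hle (by rw [hkerrank, hspanrank])
  rw [heq]
  exact LinearMap.mem_ker.mpr hu


private lemma triple_li (v : Fin 6 → Fin 3 → ℂ)
    (hv : ∀ S : Finset (Fin 6), S.card = 3 → LinearIndependent ℂ (fun i : S => v i.1))
    {a b c : Fin 6} (hab : a ≠ b) (hac : a ≠ c) (hbc : b ≠ c)
    (tc : ∀ x y z : ℂ, x • v a + y • v b + z • v c = 0 → x = 0 ∧ y = 0 ∧ z = 0) :
    LinearIndependent ℂ ![v a, v b, v c] := by
  rw [Fintype.linearIndependent_iff]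
  intro g hg
  have h := tc (g 0) (g 1) (g 2) (by
    simpa [Fin.sum_univ_three] using hg)
  intro i; fin_cases i <;> simp [h.1, h.2.1, h.2.2]

private lemma triple_span_top (v : Fin 6 → Fin 3 → ℂ)
    {a b c : Fin 6} (li : LinearIndependent ℂ ![v a, v b, v c]) :
    Submodule.span ℂ (Set.range ![v a, v b, v c]) = ⊤ := by
  apply Submodule.eq_top_of_finrank_eq
  rw [finrank_span_eq_card li]
  simp

private lemma ker_param (v w : Fin 6 → Fin 3 → ℂ)
    (liv : LinearIndependent ℂ ![v 0, v 1, v 2])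
    (liw : LinearIndependent ℂ ![w 0, w 1, w 2])
    (X Y : Matrix (Fin 3) (Fin 6) ℂ)
    (hX : X = Matrix.of fun r c => v c r) (hY : Y = Matrix.of fun r c => w c r)
    (Lam : Fin 6 → ℂ) (hLam : ∀ i, Lam i ≠ 0)
    (h0 : X * Matrix.diagonal Lam * Y.transpose = 0)
    (t : Fin 6 → ℂ) (ht : X *ᵥ t = 0) :
    ∃ p : Fin 3 → ℂ, ∀ i, t i = Lam i * (w i ⬝ᵥ p) := by
  classical
  set A : Matrix (Fin 6) (Fin 3) ℂ := Matrix.diagonal Lam * Y.transpose with hA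
  have hAentry : ∀ i j, A i j = Lam i * w i j := by
    intro i j; rw [hA, Matrix.diagonal_mul]; simp [hY]
  have hAmulvec : ∀ (p : Fin 3 → ℂ) (i : Fin 6), (A *ᵥ p) i = Lam i * (w i ⬝ᵥ p) := by
    intro p i
    simp [Matrix.mulVec, dotProduct, hAentry, Finset.mul_sum, mul_assoc]
  have hinj : Function.Injective A.mulVecLin := by
    rw [← LinearMap.ker_eq_bot, LinearMap.ker_eq_bot']
    intro p hp
    have hwp : ∀ i : Fin 6, w i ⬝ᵥ p = 0 := by
      intro i
      have h1 : (A *ᵥ p) i = 0 := by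
        rw [show A *ᵥ p = A.mulVecLin p from rfl, hp]; rfl
      rw [hAmulvec] at h1
      exact (mul_eq_zero.mp h1).resolve_left (hLam i)
    let gp : (Fin 3 → ℂ) →ₗ[ℂ] ℂ :=
      { toFun := fun z => z ⬝ᵥ p
        map_add' := fun a b => add_dotProduct a b p
        map_smul' := fun c a => smul_dotProduct c a p }
    have hker : (⊤ : Submodule ℂ (Fin 3 → ℂ)) ≤ LinearMap.ker gp := by
      rw [← triple_span_top w liw, Submodule.span_le]
      rintro z ⟨i, rfl⟩
      fin_cases i <;> exact LinearMap.mem_ker.mpr (hwp _)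
    funext j
    have := hker (Submodule.mem_top (x := (Pi.single j 1 : Fin 3 → ℂ)))
    rw [LinearMap.mem_ker] at this
    have h2 : (Pi.single j 1 : Fin 3 → ℂ) ⬝ᵥ p = p j := by
      rw [single_dotProduct, one_mul]
    rw [show gp (Pi.single j 1 : Fin 3 → ℂ) = (Pi.single j 1 : Fin 3 → ℂ) ⬝ᵥ p from rfl, h2] at this
    simpa using this
  have hXsurj : LinearMap.range X.mulVecLin = ⊤ := by
    rw [Matrix.range_mulVecLin]
    apply top_unique
    rw [← triple_span_top v liv]
    apply Submodule.span_le.mpr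
    rintro z ⟨i, rfl⟩
    fin_cases i
    · exact Submodule.subset_span ⟨0, by funext r; simp [hX]⟩
    · exact Submodule.subset_span ⟨1, by funext r; simp [hX]⟩
    · exact Submodule.subset_span ⟨2, by funext r; simp [hX]⟩
  have hker3 : finrank ℂ (LinearMap.ker X.mulVecLin) = 3 := by
    have h := LinearMap.finrank_range_add_finrank_ker X.mulVecLin
    rw [hXsurj] at h
    simp only [finrank_top] at h
    have h4 : finrank ℂ (Fin 3 → ℂ) = 3 := by simp
    have h6 : finrank ℂ (Fin 6 → ℂ) = 6 := by simp
    omega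
  have hrangeA : finrank ℂ (LinearMap.range A.mulVecLin) = 3 := by
    rw [LinearMap.finrank_range_of_inj hinj]; simp
  have hle : LinearMap.range A.mulVecLin ≤ LinearMap.ker X.mulVecLin := by
    rintro _ ⟨p, rfl⟩
    rw [LinearMap.mem_ker, Matrix.mulVecLin_apply, show A.mulVecLin p = A *ᵥ p from rfl, Matrix.mulVec_mulVec]
    have hXA : X * A = 0 := by rw [hA, ← Matrix.mul_assoc]; exact h0
    rw [hXA, Matrix.zero_mulVec]
  have heq : LinearMap.range A.mulVecLin = LinearMap.ker X.mulVecLin :=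
    Submodule.eq_of_le_of_finrank_le hle (by rw [hker3, hrangeA])
  have htmem : t ∈ LinearMap.range A.mulVecLin := by
    rw [heq, LinearMap.mem_ker, Matrix.mulVecLin_apply]; exact ht
  obtain ⟨p, hp⟩ := htmem
  refine ⟨p, fun i => ?_⟩
  rw [← hAmulvec p i, show A *ᵥ p = A.mulVecLin p from rfl, hp]

private lemma gale_dir (v w : Fin 6 → Fin 3 → ℂ)
    (hv : ∀ S : Finset (Fin 6), S.card = 3 → LinearIndependent ℂ (fun i : S => v i.1))
    (hw : ∀ S : Finset (Fin 6), S.card = 3 → LinearIndependent ℂ (fun i : S => w i.1))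
    (X Y : Matrix (Fin 3) (Fin 6) ℂ)
    (hX : X = Matrix.of fun r c => v c r) (hY : Y = Matrix.of fun r c => w c r)
    (Lam : Fin 6 → ℂ) (hLam : ∀ i, Lam i ≠ 0)
    (h0 : X * Matrix.diagonal Lam * Y.transpose = 0)
    (h : ∃ σ : Equiv.Perm (Fin 6), ∃ u : Fin 3 → ℂ, u ≠ 0 ∧
        u ∈ Submodule.span ℂ {v (σ 0), v (σ 1)} ∧
        u ∈ Submodule.span ℂ {v (σ 2), v (σ 3)} ∧
        u ∈ Submodule.span ℂ {v (σ 4), v (σ 5)}) :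
    (∃ σ : Equiv.Perm (Fin 6), ∃ u : Fin 3 → ℂ, u ≠ 0 ∧
        u ∈ Submodule.span ℂ {w (σ 0), w (σ 1)} ∧
        u ∈ Submodule.span ℂ {w (σ 2), w (σ 3)} ∧
        u ∈ Submodule.span ℂ {w (σ 4), w (σ 5)}) := by
  classical
  obtain ⟨σ, u, hu0, h1, h2, h3⟩ := h
  set a := σ 0 with ha'
  set b := σ 1 with hb'
  set c := σ 2 with hc'
  set d := σ 3 with hd'
  set e := σ 4 with he'
  set f := σ 5 with hf'
  have hne : ∀ i j : Fin 6, i ≠ j → σ i ≠ σ j := fun i j hij hh => hij (σ.injective hh)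
  have hab : a ≠ b := hne 0 1 (by decide)
  have hac : a ≠ c := hne 0 2 (by decide)
  have had : a ≠ d := hne 0 3 (by decide)
  have hae : a ≠ e := hne 0 4 (by decide)
  have haf : a ≠ f := hne 0 5 (by decide)
  have hbc : b ≠ c := hne 1 2 (by decide)
  have hbd : b ≠ d := hne 1 3 (by decide)
  have hbe : b ≠ e := hne 1 4 (by decide)
  have hbf : b ≠ f := hne 1 5 (by decide)
  have hcd : c ≠ d := hne 2 3 (by decide)
  have hce : c ≠ e := hne 2 4 (by decide)
  have hcf : c ≠ f := hne 2 5 (by decide)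
  have hde : d ≠ e := hne 3 4 (by decide)
  have hdf : d ≠ f := hne 3 5 (by decide)
  have hef : e ≠ f := hne 4 5 (by decide)
  obtain ⟨xa, xb, hvab⟩ := Submodule.mem_span_pair.mp h1
  obtain ⟨xc, xd, hvcd⟩ := Submodule.mem_span_pair.mp h2
  obtain ⟨xe, xf, hvef⟩ := Submodule.mem_span_pair.mp h3
  -- xc ≠ 0 and xe ≠ 0
  have hxc : xc ≠ 0 := by
    intro hc0
    have hud : xd • v d = u := by simpa [hc0] using hvcd
    have h5 : xa • v a + xb • v b + (-xd) • v d = 0 := by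
      rw [neg_smul, hvab, hud, add_neg_cancel]
    obtain ⟨-, -, h6⟩ := triple_coeff v hv hab had hbd xa xb (-xd) h5
    rw [neg_eq_zero] at h6
    exact hu0 (by rw [← hud, h6, zero_smul])
  have hxe : xe ≠ 0 := by
    intro he0
    have hud : xf • v f = u := by simpa [he0] using hvef
    have h5 : xa • v a + xb • v b + (-xf) • v f = 0 := by
      rw [neg_smul, hvab, hud, add_neg_cancel]
    obtain ⟨-, -, h6⟩ := triple_coeff v hv hab haf hbf xa xb (-xf) h5
    rw [neg_eq_zero] at h6
    exact hu0 (by rw [← hud, h6, zero_smul])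
  -- li for ker_param
  have liv : LinearIndependent ℂ ![v 0, v 1, v 2] :=
    triple_li v hv (by decide) (by decide) (by decide)
      (triple_coeff v hv (by decide) (by decide) (by decide))
  have liw : LinearIndependent ℂ ![w 0, w 1, w 2] :=
    triple_li w hw (by decide) (by decide) (by decide)
      (triple_coeff w hw (by decide) (by decide) (by decide))
  -- column fact
  have hcol : ∀ i : Fin 6, X *ᵥ (Pi.single i 1 : Fin 6 → ℂ) = v i := by
    intro i; funext r; rw [Matrix.mulVec_single]; simp [hX]
  -- first kernel vector
  set t1 : Fin 6 → ℂ := xa • (Pi.single a 1 : Fin 6 → ℂ) + xb • (Pi.single b 1 : Fin 6 → ℂ)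
      + (-xc) • (Pi.single c 1 : Fin 6 → ℂ) + (-xd) • (Pi.single d 1 : Fin 6 → ℂ) with ht1def
  have ht1 : X *ᵥ t1 = 0 := by
    rw [ht1def]
    simp only [Matrix.mulVec_add, Matrix.mulVec_smul, hcol]
    rw [neg_smul, neg_smul, add_assoc (xa • v a + xb • v b), ← neg_add, hvab, hvcd,
      add_neg_cancel]
  obtain ⟨p, hp⟩ := ker_param v w liv liw X Y hX hY Lam hLam h0 t1 ht1
  set t2 : Fin 6 → ℂ := xa • (Pi.single a 1 : Fin 6 → ℂ) + xb • (Pi.single b 1 : Fin 6 → ℂ)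
      + (-xe) • (Pi.single e 1 : Fin 6 → ℂ) + (-xf) • (Pi.single f 1 : Fin 6 → ℂ) with ht2def
  have ht2 : X *ᵥ t2 = 0 := by
    rw [ht2def]
    simp only [Matrix.mulVec_add, Matrix.mulVec_smul, hcol]
    rw [neg_smul, neg_smul, add_assoc (xa • v a + xb • v b), ← neg_add, hvab, hvef,
      add_neg_cancel]
  obtain ⟨q, hq⟩ := ker_param v w liv liw X Y hX hY Lam hLam h0 t2 ht2
  -- evaluate t1
  have t1a : t1 a = xa := by simp [ht1def, Pi.single_apply, hab, hac, had, Ne.symm hab, Ne.symm hac, Ne.symm had]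
  have t1b : t1 b = xb := by simp [ht1def, Pi.single_apply, Ne.symm hab, hbc, hbd, Ne.symm hbc, Ne.symm hbd, hab]
  have t1c : t1 c = -xc := by simp [ht1def, Pi.single_apply, Ne.symm hac, Ne.symm hbc, hcd, Ne.symm hcd]
  have t1e : t1 e = 0 := by simp [ht1def, Pi.single_apply, Ne.symm hae, Ne.symm hbe, Ne.symm hce, Ne.symm hde]
  have t1f : t1 f = 0 := by simp [ht1def, Pi.single_apply, Ne.symm haf, Ne.symm hbf, Ne.symm hcf, Ne.symm hdf]
  have t2a : t2 a = xa := by simp [ht2def, Pi.single_apply, hab, hae, haf, Ne.symm hab, Ne.symm hae, Ne.symm haf]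
  have t2b : t2 b = xb := by simp [ht2def, Pi.single_apply, Ne.symm hab, hbe, hbf, Ne.symm hbe, Ne.symm hbf]
  have t2c : t2 c = 0 := by simp [ht2def, Pi.single_apply, Ne.symm hac, Ne.symm hbc, hce, hcf]
  have t2d : t2 d = 0 := by simp [ht2def, Pi.single_apply, Ne.symm had, Ne.symm hbd, hde, hdf]
  have t2e : t2 e = -xe := by simp [ht2def, Pi.single_apply, Ne.symm hae, Ne.symm hbe, hef, Ne.symm hef]
  -- dot product facts
  have hwep : w e ⬝ᵥ p = 0 := by
    have := (hp e).symm; rw [t1e] at this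
    exact (mul_eq_zero.mp this).resolve_left (hLam e)
  have hwfp : w f ⬝ᵥ p = 0 := by
    have := (hp f).symm; rw [t1f] at this
    exact (mul_eq_zero.mp this).resolve_left (hLam f)
  have hwcp : w c ⬝ᵥ p ≠ 0 := by
    intro hz
    have := hp c; rw [t1c, hz, mul_zero] at this
    exact hxc (neg_eq_zero.mp this)
  have hwcq : w c ⬝ᵥ q = 0 := by
    have := (hq c).symm; rw [t2c] at this
    exact (mul_eq_zero.mp this).resolve_left (hLam c)
  have hwdq : w d ⬝ᵥ q = 0 := by
    have := (hq d).symm; rw [t2d] at this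
    exact (mul_eq_zero.mp this).resolve_left (hLam d)
  have hweq : w e ⬝ᵥ q ≠ 0 := by
    intro hz
    have := hq e; rw [t2e, hz, mul_zero] at this
    exact hxe (neg_eq_zero.mp this)
  have hwar : w a ⬝ᵥ (p - q) = 0 := by
    rw [dotProduct_sub]
    have h1 := hp a; rw [t1a] at h1
    have h2 := hq a; rw [t2a] at h2
    have := h1.symm.trans h2
    rw [mul_eq_mul_left_iff] at this
    rcases this with hh | hh
    · rw [hh, sub_self]
    · exact absurd hh (hLam a)
  have hwbr : w b ⬝ᵥ (p - q) = 0 := by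
    rw [dotProduct_sub]
    have h1 := hp b; rw [t1b] at h1
    have h2 := hq b; rw [t2b] at h2
    have := h1.symm.trans h2
    rw [mul_eq_mul_left_iff] at this
    rcases this with hh | hh
    · rw [hh, sub_self]
    · exact absurd hh (hLam b)
  have hwcr : w c ⬝ᵥ (p - q) ≠ 0 := by
    rw [dotProduct_sub, hwcq, sub_zero]; exact hwcp
  have hr0 : p - q ≠ 0 := fun hh => hwcr (by rw [hh, dotProduct_zero])
  have hp0 : p ≠ 0 := fun hh => hwcp (by rw [hh, dotProduct_zero])
  have hq0 : q ≠ 0 := fun hh => hweq (by rw [hh, dotProduct_zero])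
  -- find common point u'
  set M : Matrix (Fin 3) (Fin 3) ℂ := Matrix.of ![p, q, 0] with hM
  have hdet : M.det = 0 := Matrix.det_eq_zero_of_row_eq_zero 2 (by intro j; simp [hM])
  obtain ⟨u', hu'0, hMu'⟩ := Matrix.exists_mulVec_eq_zero_iff.mpr hdet
  have hpu' : p ⬝ᵥ u' = 0 := by
    have := congrFun hMu' 0
    simpa [hM, Matrix.mulVec] using this
  have hqu' : q ⬝ᵥ u' = 0 := by
    have := congrFun hMu' 1
    simpa [hM, Matrix.mulVec] using this
  have hru' : (p - q) ⬝ᵥ u' = 0 := by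
    rw [sub_dotProduct, hpu', hqu', sub_zero]
  -- pairs for w
  have pairw : ∀ {i j k : Fin 6}, i ≠ j → i ≠ k → j ≠ k →
      ∀ s t : ℂ, s • w i + t • w j = 0 → s = 0 ∧ t = 0 := by
    intro i j k hij hik hjk s t hst
    obtain ⟨hs, ht, -⟩ := triple_coeff w hw hij hik hjk s t 0 (by simpa using hst)
    exact ⟨hs, ht⟩
  refine ⟨σ, u', hu'0, ?_, ?_, ?_⟩
  · exact mem_span_pair_of_dot (w a) (w b) (p - q) u' hr0 (pairw hab hac hbc) hwar hwbr
      (by rw [dotProduct_comm]; exact hru')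
  · exact mem_span_pair_of_dot (w c) (w d) q u' hq0 (pairw hcd hce hde) hwcq hwdq
      (by rw [dotProduct_comm]; exact hqu')
  · exact mem_span_pair_of_dot (w e) (w f) p u' hp0 (pairw hef (Ne.symm hae) (Ne.symm haf)) hwep hwfp
      (by rw [dotProduct_comm]; exact hpu')

/-- Proposition `gale`: let `v₁, …, v₆` and `w₁, …, w₆` be vectors of `ℂ³`,
any three of the `vᵢ` linearly independent and likewise for the `wᵢ`, which are associated
(Gale dual): `X·Λ·Yᵀ = 0` for some invertible diagonal `Λ`, where `X, Y` have columns the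
`vᵢ`, `wᵢ`. Then the six points of `ℙ²` given by the `vᵢ` admit a partition into three pairs
whose three connecting lines are concurrent iff the same holds for the `wᵢ`. -/
theorem stmt19 (v w : Fin 6 → Fin 3 → ℂ)
    (hv : ∀ S : Finset (Fin 6), S.card = 3 → LinearIndependent ℂ (fun i : S => v i.1))
    (hw : ∀ S : Finset (Fin 6), S.card = 3 → LinearIndependent ℂ (fun i : S => w i.1))
    (X Y : Matrix (Fin 3) (Fin 6) ℂ)
    (hX : X = Matrix.of fun r c => v c r) (hY : Y = Matrix.of fun r c => w c r)
    (hassoc : ∃ Lam : Fin 6 → ℂ, (∀ i, Lam i ≠ 0) ∧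
      X * Matrix.diagonal Lam * Y.transpose = 0) :
    ((∃ σ : Equiv.Perm (Fin 6), ∃ u : Fin 3 → ℂ, u ≠ 0 ∧
        u ∈ Submodule.span ℂ {v (σ 0), v (σ 1)} ∧
        u ∈ Submodule.span ℂ {v (σ 2), v (σ 3)} ∧
        u ∈ Submodule.span ℂ {v (σ 4), v (σ 5)}) ↔
      (∃ σ : Equiv.Perm (Fin 6), ∃ u : Fin 3 → ℂ, u ≠ 0 ∧
        u ∈ Submodule.span ℂ {w (σ 0), w (σ 1)} ∧
        u ∈ Submodule.span ℂ {w (σ 2), w (σ 3)} ∧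
        u ∈ Submodule.span ℂ {w (σ 4), w (σ 5)})) := by
  obtain ⟨Lam, hLam, h0⟩ := hassoc
  have h0' : Y * Matrix.diagonal Lam * X.transpose = 0 := by
    have h := congrArg Matrix.transpose h0
    rwa [Matrix.transpose_mul, Matrix.transpose_mul, Matrix.transpose_transpose,
      Matrix.diagonal_transpose, Matrix.transpose_zero, ← Matrix.mul_assoc] at h
  constructor
  · exact gale_dir v w hv hw X Y hX hY Lam hLam h0
  · exact gale_dir w v hw hv Y X hY hX Lam hLam h0'
end
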